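/- arXiv:2602.08347 — 9 statements merged into one kernel-verified Lean document; each statement's English description precedes it below -/
import Mathlib

section
/- Let d ∈ [0,1) and α > 0. Define p_k = ((1−d)/α)·∏_{j=1}^{k} (α+(j−1)d)/(α+(j−1)d+1) for k = 1,2,…. Then ∑_{k=1}^{∞} p_k = 1; that is, the sequence (p_k)_{k≥1} has sum 1. -/
/-!
The Pitman–Yor masses are stick-breaking weights: with `r k = (1 - d) / (α + k d + 1)` one has
`p_k = r k * ∏_{j<k} (1 - r j)`, because `1 - r j = (α + (j + 1) d) / (α + j d + 1)` shifts the
numerators of the defining product by one. Partial sums of stick-breaking weights telescope to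
`1 - ∏_{j<n} (1 - r j)`, and `∏_{j<n} (1 - r j) ≤ exp (-∑_{j<n} r j) → 0` because `∑ r j`
diverges by comparison with the harmonic series.
-/

open Finset Filter Topology

theorem sum_range_mul_prod_one_sub {R : Type*} [CommRing R] (r : ℕ → R) (n : ℕ) :
    ∑ k ∈ range n, r k * ∏ j ∈ range k, (1 - r j) = 1 - ∏ j ∈ range n, (1 - r j) := by
  induction n with
  | zero => simp
  | succ n ih => rw [sum_range_succ, ih, prod_range_succ]; ring

theorem tendsto_prod_one_sub_of_not_summable {r : ℕ → ℝ} (h0 : ∀ k, 0 ≤ r k)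
    (h1 : ∀ k, r k ≤ 1) (hr : ¬Summable r) :
    Tendsto (fun n ↦ ∏ j ∈ range n, (1 - r j)) atTop (𝓝 0) := by
  have hexp : Tendsto (fun n ↦ Real.exp (-∑ j ∈ range n, r j)) atTop (𝓝 0) :=
    Real.tendsto_exp_neg_atTop_nhds_zero.comp
      ((not_summable_iff_tendsto_nat_atTop_of_nonneg h0).mp hr)
  refine tendsto_of_tendsto_of_tendsto_of_le_of_le tendsto_const_nhds hexp
    (fun n ↦ prod_nonneg fun j _ ↦ sub_nonneg.mpr (h1 j)) fun n ↦ ?_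
  calc ∏ j ∈ range n, (1 - r j) ≤ ∏ j ∈ range n, Real.exp (-r j) :=
        prod_le_prod (fun j _ ↦ sub_nonneg.mpr (h1 j)) fun j _ ↦ Real.one_sub_le_exp_neg _
    _ = Real.exp (-∑ j ∈ range n, r j) := by rw [← Real.exp_sum, sum_neg_distrib]

theorem hasSum_mul_prod_one_sub {r : ℕ → ℝ} (h0 : ∀ k, 0 ≤ r k) (h1 : ∀ k, r k ≤ 1)
    (hr : ¬Summable r) : HasSum (fun k ↦ r k * ∏ j ∈ range k, (1 - r j)) 1 := by
  rw [hasSum_iff_tendsto_nat_of_nonneg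
    fun k ↦ mul_nonneg (h0 k) (prod_nonneg fun j _ ↦ sub_nonneg.mpr (h1 j))]
  simp_rw [sum_range_mul_prod_one_sub]
  simpa using (tendsto_prod_one_sub_of_not_summable h0 h1 hr).const_sub 1

theorem not_summable_one_div_add_mul {a b : ℝ} (ha : 0 < a) (hb : 0 ≤ b) :
    ¬Summable fun k : ℕ ↦ 1 / (a + k * b) := by
  intro h
  have hharm : Summable fun k : ℕ ↦ 1 / ((k : ℝ) + 1) := by
    refine (summable_mul_left_iff (a := (a + b)⁻¹) (by positivity)).mp
      (h.of_nonneg_of_le (fun k ↦ by positivity) fun k ↦ ?_)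
    rw [← one_div, div_mul_div_comm, one_mul]
    gcongr
    nlinarith [(k.cast_nonneg : (0 : ℝ) ≤ k)]
  exact Real.not_summable_one_div_natCast <| (summable_nat_add_iff 1).mp <| by
    simpa using hharm

theorem prod_range_succ_div_add_one {K : Type*} [Field K] (a : ℕ → K) (ha : ∀ j, a j + 1 ≠ 0)
    (k : ℕ) : ∏ j ∈ range (k + 1), a j / (a j + 1) =
      a 0 / (a k + 1) * ∏ j ∈ range k, a (j + 1) / (a j + 1) := by
  induction k with
  | zero => simp
  | succ k ih =>
    rw [prod_range_succ, ih, prod_range_succ]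
    field_simp [ha k, ha (k + 1)]

/-- The marginal Pitman–Yor probability mass function sums to one. -/
theorem mpy_hasSum_one (d α : ℝ) (hd0 : 0 ≤ d) (hd1 : d < 1) (hα : 0 < α) :
    HasSum
      (fun k : ℕ =>
        ((1 - d) / α) *
          ∏ j ∈ Finset.range (k + 1), (α + (j : ℝ) * d) / (α + (j : ℝ) * d + 1))
      1 := by
  have hpos : ∀ j : ℕ, 0 < α + j * d + 1 := fun j ↦ by positivity
  set r : ℕ → ℝ := fun k ↦ (1 - d) / (α + k * d + 1)
  have hr0 : ∀ k, 0 ≤ r k := fun k ↦ div_nonneg (by linarith) (hpos k).le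
  have hr1 : ∀ k, r k ≤ 1 := fun k ↦
    (div_le_one (hpos k)).mpr (by nlinarith [(k.cast_nonneg : (0 : ℝ) ≤ k)])
  have hr : ¬Summable r := fun h ↦ not_summable_one_div_add_mul (add_pos hα one_pos) hd0 <|
    (summable_mul_left_iff (sub_ne_zero.mpr hd1.ne')).mp <| h.congr fun k ↦ by
      simp only [r, mul_one_div, add_right_comm α]
  convert hasSum_mul_prod_one_sub hr0 hr1 hr using 2 with k
  rw [prod_range_succ_div_add_one (fun j ↦ α + j * d) (fun j ↦ (hpos j).ne')]
  have hstep (j : ℕ) : (α + ↑(j + 1) * d) / (α + j * d + 1) = 1 - r j := by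
    simp only [r]
    field_simp [(hpos j).ne']
    push_cast
    ring
  rw [prod_congr rfl fun j _ ↦ hstep j, Nat.cast_zero, zero_mul, add_zero, ← mul_assoc,
    div_mul_div_cancel₀ hα.ne']
end

section
/- Let d ∈ (0,1) and α > 0. Set c = (1−d)·Γ((α+1)/d)/(α·Γ(α/d)) and g(k) = Γ(α/d + k)/Γ((α+1)/d + k) for k = 1,2,…, and let H = −∑_{k=1}^{∞} p_k log p_k, where p_k = c·g(k) is the marginal Pitman–Yor pmf. Then, as n → ∞ along the natural numbers, the sequence H − [ −log c − c·∑_{k=1}^{n} g(k)·log g(k) + c·( (n+1)^{(d−1)/d}/(1−d) · log(n+1) + d·(n+1)^{(d−1)/d}/(d−1)^2 ) ] is O(n^{−1/d} · log n). -/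
/-!
Write `e = 1/d > 1` and `a = α/d`, so that `g k = Γ(a+k)/Γ(a+k+e)`. Log-convexity of `Γ` squeezes
this ratio between `(a+k+e)^(-e)` and `(a+k-1)^(-e)`; as `x ↦ -x log x` increases on
`[0, exp (-1)]`, `-g k log g k` lies between `e f(a+k+e)` and `e f(a+k-1)`, where
`f x = x^(-e) log x`. Since `f` decreases on `[exp 1, ∞)` and has the explicit tail integral `F`,
the tail `∑_{k>n} -g k log g k` lies between `e F(n+1+a+e)` and `e F(n+a-1)`, and any two shifts
`F(n+p) - F(n+q)` are `O(f n)`. Finally `(e-1) g k = T k - T (k+1)` with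
`T k = Γ(a+k)/Γ(a+k+e-1)` telescopes to `c ∑ g = 1`, which turns `H` into
`-log c + c ∑ -g k log g k`.
-/

open Filter Real Set Topology Asymptotics

namespace Real

lemma log_Gamma_add_sub_log_Gamma_le {y e : ℝ} (hy : 0 < y) (he : 0 < e) :
    log (Gamma (y + e)) - log (Gamma y) ≤ e * log (y + e) := by
  have hslope := convexOn_log_Gamma.slope_mono_adjacent (x := y) (y := y + e) (z := y + e + 1)
    hy (by simp only [mem_Ioi]; linarith) (by linarith) (by linarith)
  have hstep : log (Gamma (y + e + 1)) = log (y + e) + log (Gamma (y + e)) := by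
    rw [Gamma_add_one (by linarith), log_mul (by linarith) (Gamma_pos_of_pos (by linarith)).ne']
  simp only [Function.comp, hstep, add_sub_cancel_left, add_sub_cancel_right, div_one] at hslope
  rwa [div_le_iff₀ he, mul_comm] at hslope

lemma mul_log_sub_one_le_log_Gamma_add_sub_log_Gamma {y e : ℝ} (hy : 1 < y) (he : 0 < e) :
    e * log (y - 1) ≤ log (Gamma (y + e)) - log (Gamma y) := by
  have hslope := convexOn_log_Gamma.slope_mono_adjacent (x := y - 1) (y := y) (z := y + e)
    (by simp only [mem_Ioi]; linarith) (by simp only [mem_Ioi]; linarith) (by linarith)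
    (by linarith)
  have hstep : log (Gamma y) = log (y - 1) + log (Gamma (y - 1)) := by
    rw [← log_mul (by linarith) (Gamma_pos_of_pos (by linarith)).ne', ← Gamma_add_one (by linarith),
      sub_add_cancel]
  simp only [Function.comp, hstep] at hslope
  rw [sub_sub_cancel, div_one, add_sub_cancel_left, le_div_iff₀ he] at hslope
  linarith

lemma rpow_neg_le_Gamma_div_Gamma_add {y e : ℝ} (hy : 0 < y) (he : 0 < e) :
    (y + e) ^ (-e) ≤ Gamma y / Gamma (y + e) := by
  rw [rpow_def_of_pos (by linarith), ← exp_log (div_pos (Gamma_pos_of_pos hy)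
    (Gamma_pos_of_pos (by linarith))), log_div (Gamma_pos_of_pos hy).ne'
    (Gamma_pos_of_pos (by linarith)).ne', exp_le_exp]
  linarith [log_Gamma_add_sub_log_Gamma_le hy he]

lemma Gamma_div_Gamma_add_le_rpow_neg {y e : ℝ} (hy : 1 < y) (he : 0 < e) :
    Gamma y / Gamma (y + e) ≤ (y - 1) ^ (-e) := by
  rw [rpow_def_of_pos (by linarith), ← exp_log (div_pos (Gamma_pos_of_pos (by linarith))
    (Gamma_pos_of_pos (by linarith))), log_div (Gamma_pos_of_pos (by linarith)).ne'
    (Gamma_pos_of_pos (by linarith)).ne', exp_le_exp]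
  linarith [mul_log_sub_one_le_log_Gamma_add_sub_log_Gamma hy he]

lemma tendsto_Gamma_add_div_Gamma_add_add {y e : ℝ} (hy : 0 < y) (he : 0 < e) :
    Tendsto (fun k : ℕ => Gamma (y + k) / Gamma (y + k + e)) atTop (𝓝 0) := by
  have hbound : ∀ᶠ k : ℕ in atTop, Gamma (y + k) / Gamma (y + k + e) ≤ (y + k - 1) ^ (-e) := by
    filter_upwards [eventually_ge_atTop 2] with k hk
    have hk' : (2 : ℝ) ≤ k := by exact_mod_cast hk
    exact Gamma_div_Gamma_add_le_rpow_neg (by linarith) he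
  refine squeeze_zero' (Eventually.of_forall fun k => ?_) hbound ?_
  · exact (div_pos (Gamma_pos_of_pos (by positivity)) (Gamma_pos_of_pos (by positivity))).le
  · refine (tendsto_rpow_neg_atTop he).comp (tendsto_atTop_add_const_right _ _ ?_)
    exact tendsto_atTop_add_const_left _ _ tendsto_natCast_atTop_atTop

lemma Gamma_add_div_Gamma_add_add_eq_sub {y e : ℝ} (hy : 0 < y) (he : 1 < e) (k : ℕ) :
    Gamma (y + k) / Gamma (y + k + e) = (Gamma (y + k) / Gamma (y + k + (e - 1)) -
      Gamma (y + (k + 1 : ℕ)) / Gamma (y + (k + 1 : ℕ) + (e - 1))) / (e - 1) := by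
  have hyk : 0 < y + k := by positivity
  have hshift : Gamma (y + k + e) = (y + k + (e - 1)) * Gamma (y + k + (e - 1)) := by
    rw [← Gamma_add_one (by linarith)]; ring_nf
  have hnext : Gamma (y + (k + 1 : ℕ)) = (y + k) * Gamma (y + k) := by
    rw [← Gamma_add_one hyk.ne']; push_cast; ring_nf
  have hnext' : y + (k + 1 : ℕ) + (e - 1) = y + k + e := by push_cast; ring
  have h1 := (Gamma_pos_of_pos (show 0 < y + k + (e - 1) by linarith)).ne'
  have h2 : y + k + (e - 1) ≠ 0 := by linarith
  have h3 : e - 1 ≠ 0 := by linarith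
  rw [hnext, hnext', hshift]
  field_simp
  ring

lemma hasSum_Gamma_add_div_Gamma_add_add {y e : ℝ} (hy : 0 < y) (he : 1 < e) :
    HasSum (fun k : ℕ => Gamma (y + k) / Gamma (y + k + e))
      (Gamma y / ((e - 1) * Gamma (y + e - 1))) := by
  set T : ℕ → ℝ := fun k => Gamma (y + k) / Gamma (y + k + (e - 1))
  rw [hasSum_iff_tendsto_nat_of_nonneg fun k =>
    (div_pos (Gamma_pos_of_pos (by positivity)) (Gamma_pos_of_pos (by positivity))).le]
  have hpartial : ∀ n, ∑ k ∈ Finset.range n, Gamma (y + k) / Gamma (y + k + e) =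
      (T 0 - T n) / (e - 1) := fun n => by
    rw [← Finset.sum_range_sub', Finset.sum_div]
    exact Finset.sum_congr rfl fun k _ => Gamma_add_div_Gamma_add_add_eq_sub hy he k
  have hT : Tendsto T atTop (𝓝 0) := tendsto_Gamma_add_div_Gamma_add_add hy (by linarith)
  convert ((tendsto_const_nhds (x := T 0)).sub hT).div_const (e - 1) using 1
  · exact funext hpartial
  · simp only [T, Nat.cast_zero, add_zero, sub_zero]
    rw [div_div, mul_comm, add_sub_assoc]

lemma monotoneOn_negMulLog : MonotoneOn negMulLog (Icc 0 (exp (-1))) := by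
  refine monotoneOn_of_deriv_nonneg (convex_Icc _ _) continuous_negMulLog.continuousOn
    (fun x hx => ?_) fun x hx => ?_
  all_goals rw [interior_Icc] at hx
  · exact (differentiableAt_negMulLog_iff.2 hx.1.ne').differentiableWithinAt
  · have hlog : log x < -1 := by rw [log_lt_iff_lt_exp hx.1]; exact hx.2
    rw [deriv_negMulLog hx.1.ne']
    linarith

lemma rpow_neg_le_exp_neg_one {x e : ℝ} (hx : exp 1 ≤ x) (he : 1 ≤ e) : x ^ (-e) ≤ exp (-1) := by
  have hx0 : 0 < x := (exp_pos 1).trans_le hx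
  rw [rpow_def_of_pos hx0, exp_le_exp]
  have : 1 ≤ log x := by rwa [le_log_iff_exp_le hx0]
  nlinarith

end Real

noncomputable def powLog (e x : ℝ) : ℝ := x ^ (-e) * log x

/-- `∫_x^∞ powLog e` for `e > 1`. -/
noncomputable def powLogTail (e x : ℝ) : ℝ := x ^ (1 - e) * (log x / (e - 1) + 1 / (e - 1) ^ 2)

section powLog

variable {e x : ℝ}

lemma powLog_nonneg (hx : 1 ≤ x) : 0 ≤ powLog e x :=
  mul_nonneg (rpow_nonneg (by linarith) _) (log_nonneg hx)

lemma powLogTail_nonneg (he : 1 < e) (hx : 1 ≤ x) : 0 ≤ powLogTail e x := by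
  have : 0 < e - 1 := by linarith
  have := log_nonneg hx
  exact mul_nonneg (rpow_nonneg (by linarith) _) (by positivity)

lemma hasDerivAt_powLog (hx : 0 < x) :
    HasDerivAt (powLog e) (x ^ (-e - 1) * (1 - e * log x)) x := by
  have hpow : HasDerivAt (fun t : ℝ => t ^ (-e)) (-e * x ^ (-e - 1)) x := by
    simpa using hasDerivAt_rpow_const (p := -e) (Or.inl hx.ne')
  refine (hpow.mul (hasDerivAt_log hx.ne')).congr_deriv ?_
  rw [← rpow_neg_one x, ← rpow_add hx]
  ring_nf

lemma hasDerivAt_powLogTail (he : e ≠ 1) (hx : 0 < x) :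
    HasDerivAt (powLogTail e) (-powLog e x) x := by
  have he' : e - 1 ≠ 0 := sub_ne_zero.2 he
  have hpow : HasDerivAt (fun t : ℝ => t ^ (1 - e)) ((1 - e) * x ^ (1 - e - 1)) x :=
    hasDerivAt_rpow_const (Or.inl hx.ne')
  refine (hpow.mul (((hasDerivAt_log hx.ne').div_const (e - 1)).add_const
    (1 / (e - 1) ^ 2))).congr_deriv ?_
  have hsucc : x ^ (1 - e) = x ^ (-e) * x := by
    rw [show 1 - e = -e + 1 by ring, rpow_add hx, rpow_one]
  rw [powLog, hsucc, show 1 - e - 1 = -e by ring]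
  field_simp
  ring

lemma antitoneOn_powLog (he : 1 ≤ e) : AntitoneOn (powLog e) (Ici (exp 1)) := by
  have hpos : ∀ x ∈ Ici (exp 1), 0 < x := fun x hx => (exp_pos 1).trans_le hx
  refine antitoneOn_of_deriv_nonpos (convex_Ici _)
    (fun x hx => (hasDerivAt_powLog (hpos x hx)).continuousAt.continuousWithinAt)
    (fun x hx => ?_) fun x hx => ?_
  all_goals rw [interior_Ici] at hx
  · exact (hasDerivAt_powLog (hpos x (Ioi_subset_Ici_self hx))).differentiableAt
      |>.differentiableWithinAt
  · have hx0 := hpos x (Ioi_subset_Ici_self hx)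
    have hlog : 1 ≤ log x := by rw [le_log_iff_exp_le hx0]; exact le_of_lt hx
    rw [(hasDerivAt_powLog hx0).deriv]
    exact mul_nonpos_of_nonneg_of_nonpos (rpow_nonneg hx0.le _) (by nlinarith)

lemma antitoneOn_powLogTail (he : e ≠ 1) : AntitoneOn (powLogTail e) (Ici 1) := by
  have hpos : ∀ x ∈ Ici (1 : ℝ), 0 < x := fun x hx => one_pos.trans_le hx
  refine antitoneOn_of_deriv_nonpos (convex_Ici _)
    (fun x hx => (hasDerivAt_powLogTail he (hpos x hx)).continuousAt.continuousWithinAt)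
    (fun x hx => ?_) fun x hx => ?_
  all_goals rw [interior_Ici] at hx
  · exact (hasDerivAt_powLogTail he (hpos x (Ioi_subset_Ici_self hx))).differentiableAt
      |>.differentiableWithinAt
  · rw [(hasDerivAt_powLogTail he (hpos x (Ioi_subset_Ici_self hx))).deriv, neg_nonpos]
    exact powLog_nonneg (le_of_lt hx)

lemma integral_powLog (he : e ≠ 1) {u v : ℝ} (hu : 0 < u) (hv : 0 < v) :
    ∫ x in u..v, powLog e x = powLogTail e u - powLogTail e v := by
  have hpos : ∀ x ∈ uIcc u v, 0 < x := fun x hx => (lt_inf_iff.2 ⟨hu, hv⟩).trans_le hx.1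
  rw [intervalIntegral.integral_eq_sub_of_hasDerivAt (f := -powLogTail e)
    (fun x hx => by simpa using (hasDerivAt_powLogTail he (hpos x hx)).neg)
    (ContinuousOn.intervalIntegrable fun x hx =>
      (hasDerivAt_powLog (hpos x hx)).continuousAt.continuousWithinAt)]
  simp only [Pi.neg_apply]
  ring

lemma powLogTail_sub_le (he : 1 < e) {u v : ℝ} (hu : exp 1 ≤ u) (huv : u ≤ v) :
    powLogTail e u - powLogTail e v ≤ (v - u) * powLog e u := by
  have hu0 : 0 < u := (exp_pos 1).trans_le hu
  have hanti : AntitoneOn (powLog e) (uIcc u v) := (antitoneOn_powLog he.le).mono <| by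
    rw [uIcc_of_le huv]; exact fun x hx => hu.trans hx.1
  rw [← integral_powLog he.ne' hu0 (hu0.trans_le huv)]
  calc ∫ x in u..v, powLog e x ≤ ∫ _ in u..v, powLog e u :=
        intervalIntegral.integral_mono_on huv hanti.intervalIntegrable intervalIntegrable_const
          fun x hx => hanti left_mem_uIcc (uIcc_of_le huv ▸ hx) hx.1
    _ = (v - u) * powLog e u := by simp

lemma tendsto_powLogTail_atTop (he : 1 < e) : Tendsto (powLogTail e) atTop (𝓝 0) := by
  have he' : 0 < e - 1 := by linarith
  have hlog : Tendsto (fun x : ℝ => x ^ (1 - e) * log x) atTop (𝓝 0) := by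
    refine (isLittleO_log_rpow_atTop he').tendsto_div_nhds_zero.congr' ?_
    filter_upwards [eventually_gt_atTop 0] with x hx
    rw [div_eq_mul_inv, ← rpow_neg hx.le, neg_sub, mul_comm]
  have hpow : Tendsto (fun x : ℝ => x ^ (1 - e)) atTop (𝓝 0) := by
    simpa using tendsto_rpow_neg_atTop he'
  convert (hlog.div_const (e - 1)).add (hpow.mul_const (1 / (e - 1) ^ 2)) using 2 <;>
    simp [powLogTail]; ring

lemma sum_range_powLog_add_le (he : 1 < e) {u : ℝ} (hu : exp 1 + 1 ≤ u) (N : ℕ) :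
    ∑ i ∈ Finset.range N, powLog e (u + i) ≤ powLogTail e (u - 1) := by
  have hanti : AntitoneOn (powLog e) (Icc (u - 1) (u - 1 + N)) :=
    (antitoneOn_powLog he.le).mono fun x hx => by simp only [mem_Ici]; linarith [hx.1]
  have hN : (0 : ℝ) ≤ N := N.cast_nonneg
  have hsum := hanti.sum_le_integral
  rw [integral_powLog he.ne' (by linarith [exp_pos 1]) (by linarith [exp_pos 1])] at hsum
  have hrest := powLogTail_nonneg he (x := u - 1 + N) (by linarith [add_one_le_exp (1 : ℝ)])
  calc ∑ i ∈ Finset.range N, powLog e (u + i)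
      = ∑ i ∈ Finset.range N, powLog e (u - 1 + (i + 1 : ℕ)) := by
        refine Finset.sum_congr rfl fun i _ => ?_; push_cast; ring_nf
    _ ≤ powLogTail e (u - 1) := by linarith

lemma powLogTail_sub_le_sum_range_powLog_add (he : 1 < e) {u : ℝ} (hu : exp 1 ≤ u) (N : ℕ) :
    powLogTail e u - powLogTail e (u + N) ≤ ∑ i ∈ Finset.range N, powLog e (u + i) := by
  have hanti : AntitoneOn (powLog e) (Icc u (u + N)) :=
    (antitoneOn_powLog he.le).mono fun x hx => hu.trans hx.1
  have hu0 : 0 < u := (exp_pos 1).trans_le hu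
  rw [← integral_powLog he.ne' hu0 (by positivity)]
  exact hanti.integral_le_sum

lemma summable_powLog_add_nat (he : 1 < e) {u : ℝ} (hu : exp 1 + 1 ≤ u) :
    Summable fun i : ℕ => powLog e (u + i) :=
  summable_of_sum_range_le
    (fun i => powLog_nonneg (by linarith [exp_pos 1, i.cast_nonneg (α := ℝ)]))
    (sum_range_powLog_add_le he hu)

lemma tsum_powLog_add_nat_le (he : 1 < e) {u : ℝ} (hu : exp 1 + 1 ≤ u) :
    ∑' i : ℕ, powLog e (u + i) ≤ powLogTail e (u - 1) :=
  tsum_le_of_sum_range_le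
    (fun i => powLog_nonneg (by linarith [exp_pos 1, i.cast_nonneg (α := ℝ)]))
    (sum_range_powLog_add_le he hu)

lemma powLogTail_le_tsum_powLog_add_nat (he : 1 < e) {u : ℝ} (hu : exp 1 + 1 ≤ u) :
    powLogTail e u ≤ ∑' i : ℕ, powLog e (u + i) := by
  have hlim : Tendsto (fun N : ℕ => powLogTail e u - powLogTail e (u + N)) atTop
      (𝓝 (powLogTail e u - 0)) :=
    tendsto_const_nhds.sub <| (tendsto_powLogTail_atTop he).comp <|
      tendsto_atTop_add_const_left _ _ tendsto_natCast_atTop_atTop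
  rw [sub_zero] at hlim
  exact le_of_tendsto_of_tendsto' hlim (summable_powLog_add_nat he hu).hasSum.tendsto_sum_nat
    (powLogTail_sub_le_sum_range_powLog_add he (by linarith))

lemma powLog_sub_le (he : 0 ≤ e) {x M : ℝ} (hM : 0 ≤ M) (hxM : 2 * M ≤ x) (hx : 1 ≤ x - M) :
    powLog e (x - M) ≤ 2 ^ e * powLog e x := by
  have hhalf : (x / 2) ^ (-e) = 2 ^ e * x ^ (-e) := by
    rw [div_rpow (by linarith) (by norm_num), rpow_neg (by norm_num : (0 : ℝ) ≤ 2)]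
    field_simp
  calc powLog e (x - M) ≤ (x / 2) ^ (-e) * log x :=
        mul_le_mul (rpow_le_rpow_of_nonpos (by linarith) (by linarith) (by linarith))
          (log_le_log (by linarith) (by linarith)) (log_nonneg hx) (rpow_nonneg (by linarith) _)
    _ = 2 ^ e * powLog e x := by rw [hhalf, powLog]; ring

lemma powLogTail_add_sub_powLogTail_add_isBigO (he : 1 < e) (p q : ℝ) :
    (fun x => powLogTail e (x + p) - powLogTail e (x + q)) =O[atTop] powLog e := by
  set M := |p| + |q|
  have hp : |p| ≤ M := le_add_of_nonneg_right (abs_nonneg q)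
  have hq : |q| ≤ M := le_add_of_nonneg_left (abs_nonneg p)
  have hM : 0 ≤ M := hp.trans' (abs_nonneg p)
  have hanti := antitoneOn_powLogTail he.ne'
  refine IsBigO.of_bound (2 * M * 2 ^ e) ?_
  filter_upwards [eventually_ge_atTop (exp 1 + 2 * M + 1)] with x hx
  have hx1 : exp 1 ≤ x - M := by linarith [exp_pos 1]
  have h1 : 1 ≤ x - M := by linarith [add_one_le_exp 1]
  have hmem : ∀ r, |r| ≤ M → powLogTail e (x + M) ≤ powLogTail e (x + r) ∧
      powLogTail e (x + r) ≤ powLogTail e (x - M) := fun r hr => by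
    obtain ⟨hr₁, hr₂⟩ := abs_le.1 hr
    exact ⟨hanti (by simp only [mem_Ici]; linarith) (by simp only [mem_Ici]; linarith)
      (by linarith), hanti h1 (by simp only [mem_Ici]; linarith) (by linarith)⟩
  -- `x + p` and `x + q` lie in `[x - M, x + M]`, across which `F` drops by at most `2M f(x - M)`.
  have hwindow := powLogTail_sub_le he hx1 (show x - M ≤ x + M by linarith)
  have hdecay := powLog_sub_le (e := e) (by linarith) hM (by linarith [exp_pos 1]) h1
  rw [norm_of_nonneg (powLog_nonneg (by linarith)), Real.norm_eq_abs, abs_le]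
  obtain ⟨hp₁, hp₂⟩ := hmem p hp
  obtain ⟨hq₁, hq₂⟩ := hmem q hq
  rw [show x + M - (x - M) = 2 * M by ring] at hwindow
  constructor <;> nlinarith

lemma negMulLog_rpow_neg {x : ℝ} (hx : 0 < x) (e : ℝ) :
    negMulLog (x ^ (-e)) = e * powLog e x := by
  rw [negMulLog, log_rpow hx, powLog]; ring

end powLog

lemma Asymptotics.IsBigO.of_le_of_le {α E : Type*} [Norm E] {l : Filter α} {f lo hi : α → ℝ}
    {g : α → E} (hlo : lo =O[l] g) (hhi : hi =O[l] g) (h : ∀ᶠ x in l, lo x ≤ f x ∧ f x ≤ hi x) :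
    f =O[l] g := by
  refine IsBigO.trans (IsBigO.of_bound' ?_) ((isBigO_abs_left.2 hlo).add (isBigO_abs_left.2 hhi))
  filter_upwards [h] with x hx
  rw [Real.norm_eq_abs, Real.norm_eq_abs,
    abs_of_nonneg (add_nonneg (abs_nonneg (lo x)) (abs_nonneg (hi x))), abs_le]
  constructor <;> cases abs_cases (lo x) <;> cases abs_cases (hi x) <;> linarith

noncomputable def gammaRatio (a e : ℝ) (k : ℕ) : ℝ := Gamma (a + k) / Gamma (a + k + e)

section gammaRatio

variable {a e : ℝ}

lemma gammaRatio_pos (ha : 0 < a) (he : 0 < e) (k : ℕ) : 0 < gammaRatio a e k :=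
  div_pos (Gamma_pos_of_pos (by positivity)) (Gamma_pos_of_pos (by positivity))

lemma hasSum_gammaRatio_succ (ha : 0 < a) (he : 1 < e) :
    HasSum (fun k => gammaRatio a e (k + 1)) (Gamma (a + 1) / ((e - 1) * Gamma (a + e))) := by
  have h := hasSum_Gamma_add_div_Gamma_add_add (y := a + 1) (by linarith) he
  rw [show a + 1 + e - 1 = a + e by ring] at h
  convert h using 2 with k
  simp only [gammaRatio]; push_cast; ring_nf

lemma mul_powLog_le_negMulLog_gammaRatio (ha : 0 < a) (he : 1 ≤ e) {k : ℕ}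
    (hk : exp 1 + 1 ≤ a + k) : e * powLog e (a + k + e) ≤ negMulLog (gammaRatio a e k) := by
  have hlo := rpow_neg_le_Gamma_div_Gamma_add (y := a + k) (by positivity) (e := e) (by linarith)
  have hhi := Gamma_div_Gamma_add_le_rpow_neg (y := a + k) (by linarith [add_one_le_exp (1 : ℝ)])
    (e := e) (by linarith)
  have hsmall := rpow_neg_le_exp_neg_one (x := a + k - 1) (by linarith) he
  rw [← negMulLog_rpow_neg (by positivity)]
  exact monotoneOn_negMulLog ⟨rpow_nonneg (by positivity) _, by linarith⟩
    ⟨(gammaRatio_pos ha (by linarith) k).le, hhi.trans hsmall⟩ hlo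

lemma negMulLog_gammaRatio_le_mul_powLog (ha : 0 < a) (he : 1 ≤ e) {k : ℕ}
    (hk : exp 1 + 1 ≤ a + k) : negMulLog (gammaRatio a e k) ≤ e * powLog e (a + k - 1) := by
  have hhi := Gamma_div_Gamma_add_le_rpow_neg (y := a + k) (by linarith [add_one_le_exp (1 : ℝ)])
    (e := e) (by linarith)
  have hsmall := rpow_neg_le_exp_neg_one (x := a + k - 1) (by linarith) he
  rw [← negMulLog_rpow_neg (by linarith [exp_pos 1])]
  exact monotoneOn_negMulLog ⟨(gammaRatio_pos ha (by linarith) k).le, hhi.trans hsmall⟩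
    ⟨rpow_nonneg (by linarith [exp_pos 1]) _, hsmall⟩ hhi

lemma negMulLog_gammaRatio_add_bounds (ha : 0 < a) (he : 1 ≤ e) {n : ℕ} (hn : exp 1 + 1 ≤ a + n)
    (i : ℕ) :
    e * powLog e (a + n + 1 + e + i) ≤ negMulLog (gammaRatio a e (i + n + 1)) ∧
      negMulLog (gammaRatio a e (i + n + 1)) ≤ e * powLog e (a + n + i) := by
  have hk : exp 1 + 1 ≤ a + (i + n + 1 : ℕ) := by push_cast; linarith [i.cast_nonneg (α := ℝ)]
  have hlo := mul_powLog_le_negMulLog_gammaRatio ha he hk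
  have hhi := negMulLog_gammaRatio_le_mul_powLog ha he hk
  push_cast at hlo hhi
  exact ⟨by convert hlo using 3; ring, by convert hhi using 3; ring⟩

lemma summable_negMulLog_gammaRatio_add (ha : 0 < a) (he : 1 < e) {n : ℕ}
    (hn : exp 1 + 1 ≤ a + n) : Summable fun i : ℕ => negMulLog (gammaRatio a e (i + n + 1)) := by
  refine Summable.of_nonneg_of_le (fun i => ?_) (fun i => (negMulLog_gammaRatio_add_bounds ha
    he.le hn i).2) ((summable_powLog_add_nat he (u := a + n) (by linarith)).mul_left e)
  have hu : 1 ≤ a + n + 1 + e + i := by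
    linarith [add_one_le_exp (1 : ℝ), i.cast_nonneg (α := ℝ)]
  exact (mul_nonneg (by linarith) (powLog_nonneg hu)).trans
    (negMulLog_gammaRatio_add_bounds ha he.le hn i).1

lemma tsum_negMulLog_gammaRatio_add_le (ha : 0 < a) (he : 1 < e) {n : ℕ}
    (hn : exp 1 + 1 ≤ a + n) :
    ∑' i : ℕ, negMulLog (gammaRatio a e (i + n + 1)) ≤ e * powLogTail e (n + (a - 1)) := by
  have hsum := summable_powLog_add_nat he (u := a + n) (by linarith)
  calc ∑' i : ℕ, negMulLog (gammaRatio a e (i + n + 1))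
      ≤ ∑' i : ℕ, e * powLog e (a + n + i) :=
        (summable_negMulLog_gammaRatio_add ha he hn).tsum_le_tsum
          (fun i => (negMulLog_gammaRatio_add_bounds ha he.le hn i).2) (hsum.mul_left e)
    _ ≤ e * powLogTail e (n + (a - 1)) := by
        rw [tsum_mul_left, show (n : ℝ) + (a - 1) = a + n - 1 by ring]
        exact mul_le_mul_of_nonneg_left (tsum_powLog_add_nat_le he (by linarith)) (by linarith)

lemma mul_powLogTail_le_tsum_negMulLog_gammaRatio_add (ha : 0 < a) (he : 1 < e) {n : ℕ}
    (hn : exp 1 + 1 ≤ a + n) :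
    e * powLogTail e (n + (a + 1 + e)) ≤ ∑' i : ℕ, negMulLog (gammaRatio a e (i + n + 1)) := by
  have hu : exp 1 + 1 ≤ a + n + 1 + e := by linarith
  calc e * powLogTail e (n + (a + 1 + e)) ≤ ∑' i : ℕ, e * powLog e (a + n + 1 + e + i) := by
        rw [tsum_mul_left, show (n : ℝ) + (a + 1 + e) = a + n + 1 + e by ring]
        exact mul_le_mul_of_nonneg_left (powLogTail_le_tsum_powLog_add_nat he hu) (by linarith)
    _ ≤ ∑' i : ℕ, negMulLog (gammaRatio a e (i + n + 1)) :=
        ((summable_powLog_add_nat he hu).mul_left e).tsum_le_tsum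
          (fun i => (negMulLog_gammaRatio_add_bounds ha he.le hn i).1)
          (summable_negMulLog_gammaRatio_add ha he hn)

lemma tsum_negMulLog_gammaRatio_add_sub_isBigO (ha : 0 < a) (he : 1 < e) :
    (fun n : ℕ => ∑' i : ℕ, negMulLog (gammaRatio a e (i + n + 1)) -
      e * powLogTail e (n + 1)) =O[atTop] fun n : ℕ => (n : ℝ) ^ (-e) * log n := by
  have hF (p : ℝ) := ((powLogTail_add_sub_powLogTail_add_isBigO he p 1).comp_tendsto
    tendsto_natCast_atTop_atTop).const_mul_left e
  refine (hF (a + 1 + e)).of_le_of_le (hF (a - 1)) ?_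
  filter_upwards [tendsto_natCast_atTop_atTop.eventually_ge_atTop (exp 1 + 1)] with n hn
  simp only [Function.comp_apply, mul_sub]
  constructor
  · linarith [mul_powLogTail_le_tsum_negMulLog_gammaRatio_add ha he (n := n) (by linarith)]
  · linarith [tsum_negMulLog_gammaRatio_add_le ha he (n := n) (by linarith)]

end gammaRatio

lemma tsum_negMulLog_const_mul {ι : Type*} {c s : ℝ} {q : ι → ℝ} (hq : HasSum q s)
    (hcs : c * s = 1) (hent : Summable fun i => negMulLog (q i)) :
    ∑' i, negMulLog (c * q i) = -log c + c * ∑' i, negMulLog (q i) := by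
  simp_rw [negMulLog_mul]
  rw [(hq.summable.mul_right _).tsum_add (hent.mul_left c), tsum_mul_right, tsum_mul_left,
    hq.tsum_eq, negMulLog]
  linear_combination (-log c) * hcs

lemma one_div_mul_powLogTail_one_div {d : ℝ} (hd0 : d ≠ 0) (hd1 : d ≠ 1) (x : ℝ) :
    1 / d * powLogTail (1 / d) x =
      x ^ ((d - 1) / d) / (1 - d) * log x + d * x ^ ((d - 1) / d) / (d - 1) ^ 2 := by
  have h1 : 1 - d ≠ 0 := sub_ne_zero.2 (Ne.symm hd1)
  have h2 : d - 1 ≠ 0 := sub_ne_zero.2 hd1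
  rw [powLogTail, show 1 - 1 / d = (d - 1) / d by field_simp, show 1 / d - 1 = (1 - d) / d by
    field_simp]
  field_simp
  ring

/-- Asymptotic expansion of the Shannon entropy of the marginal Pitman–Yor
process with discount parameter `d ∈ (0,1)`: the error of the truncated
approximation is `O(n^{-1/d} log n)`. -/
theorem mpy_entropy_asymptotic (d α : ℝ) (hd0 : 0 < d) (hd1 : d < 1) (hα : 0 < α)
    (c : ℝ) (hc : c = (1 - d) * Real.Gamma ((α + 1) / d) / (α * Real.Gamma (α / d)))
    (g : ℕ → ℝ) (hg : ∀ k : ℕ, g k = Real.Gamma (α / d + k) / Real.Gamma ((α + 1) / d + k))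
    (H : ℝ) (hH : H = -∑' k : ℕ, (c * g (k + 1)) * Real.log (c * g (k + 1))) :
    (fun n : ℕ =>
        H -
          (-Real.log c - c * ∑ k ∈ Finset.Icc 1 n, g k * Real.log (g k) +
            c *
              (((n : ℝ) + 1) ^ ((d - 1) / d) / (1 - d) * Real.log ((n : ℝ) + 1) +
                d * ((n : ℝ) + 1) ^ ((d - 1) / d) / (d - 1) ^ 2))) =O[atTop]
      (fun n : ℕ => (n : ℝ) ^ (-1 / d) * Real.log (n : ℝ)) := by
  set a := α / d
  have ha : 0 < a := div_pos hα hd0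
  have he : 1 < 1 / d := (one_lt_div hd0).2 hd1
  obtain rfl : g = gammaRatio a (1 / d) :=
    funext fun k => by rw [hg, gammaRatio, add_div, one_div, add_right_comm]
  have hnorm : c * (Gamma (a + 1) / ((1 / d - 1) * Gamma (a + 1 / d))) = 1 := by
    rw [hc, Gamma_add_one ha.ne', ← add_div, show 1 / d - 1 = (1 - d) / d by field_simp]
    have := (Gamma_pos_of_pos ha).ne'
    have := (Gamma_pos_of_pos (show 0 < (α + 1) / d by positivity)).ne'
    field_simp [(sub_pos.2 hd1).ne']
    exact mul_div_cancel₀ α hd0.ne'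
  obtain ⟨N, hN⟩ := exists_nat_ge (exp 1 + 1)
  have hent : Summable fun k => negMulLog (gammaRatio a (1 / d) (k + 1)) :=
    (summable_nat_add_iff N).1 (summable_negMulLog_gammaRatio_add ha he (n := N) (by linarith))
  have hH' : H = -log c + c * ∑' k, negMulLog (gammaRatio a (1 / d) (k + 1)) := by
    rw [hH, ← tsum_negMulLog_const_mul (hasSum_gammaRatio_succ ha he) hnorm hent, ← tsum_neg]
    simp only [negMulLog, neg_mul]
  refine ((tsum_negMulLog_gammaRatio_add_sub_isBigO ha he).const_mul_left c).congr
    (fun n => ?_) fun n => by rw [neg_div]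
  rw [hH', ← hent.sum_add_tsum_nat_add n, ← one_div_mul_powLogTail_one_div hd0.ne' hd1.ne,
    ← Finset.Ico_add_one_right_eq_Icc, Finset.sum_Ico_eq_sum_range, add_tsub_cancel_right]
  simp only [negMulLog, neg_mul, Finset.sum_neg_distrib, add_comm 1]
  ring
end

section
/- Let K, T, N be positive integers with T ≤ K, let d ∈ [0,1) and α > 0. Let p_1,…,p_K be positive reals with ∑_{i=1}^{K} p_i = 1 and suppose p_{T+1} ≥ p_{T+2} ≥ ⋯ ≥ p_K. Let n_1,…,n_T be positive integers with ∑_{i=1}^{T} n_i = N. Define q_i = (n_i − d)/(N+α) for 1 ≤ i ≤ T and q_{T+i} = ((1−d)/(N+α))·∏_{j=1}^{i} (α+(T+j−1)d)/(α+(T+j−1)d+1) for 1 ≤ i ≤ K−T. Set C_1 = ∑_{i=1}^{T} p_i·1{n_i = 1} and C_0 = ∑_{i=T+1}^{K} p_i. Then the cross entropy satisfies −∑_{i=1}^{K} p_i·log q_i ≤ log(N+α) − (C_1 + C_0)·log(1−d) + (C_0/2)·(K−T+1)·log((α+Td+1)/(α+Td)). -/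
/-!
The predictive weight of an observed species `i` is `(nᵢ - d)/(N + α)`, so its contribution to the
cross entropy is at most `log (N + α)`, with an extra `-log (1 - d)` only for singletons
(`log (nᵢ - d) ≥ 0` once `nᵢ ≥ 2`). The weight of the `m`-th unseen species is
`(1 - d)/(N + α)` times `m` factors `aⱼ/(aⱼ + 1)` with `aⱼ ≥ α + T d`, so its negative logarithm is
at most `log (N + α) - log (1 - d) + m log ((α + T d + 1)/(α + T d))`. Since the unseen
probabilities are nonincreasing, Chebyshev's sum inequality gives `∑ₘ p (T + m) m ≤ C₀ (K - T + 1)/2`.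
-/

open Finset Real

lemma Finset.sum_Icc_one_natCast (M : ℕ) :
    ∑ m ∈ Icc 1 M, (m : ℝ) = M * (M + 1) / 2 := by
  induction M with
  | zero => simp
  | succ M ih =>
    rw [sum_Icc_succ_top (by omega), ih]
    push_cast
    ring

lemma Finset.sum_Icc_one_add_sum_Icc_succ {M : Type*} [AddCommMonoid M] (f : ℕ → M) {T K : ℕ}
    (hTK : T ≤ K) :
    ∑ i ∈ Icc 1 T, f i + ∑ i ∈ Icc (T + 1) K, f i = ∑ i ∈ Icc 1 K, f i := by
  simp only [Icc_add_one_left_eq_Ioc]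
  exact sum_Ioc_consecutive f (Nat.zero_le T) hTK

lemma Finset.sum_Icc_succ_eq_sum_Icc_one {M : Type*} [AddCommMonoid M] (f : ℕ → M) {T K : ℕ}
    (hTK : T ≤ K) :
    ∑ i ∈ Icc (T + 1) K, f i = ∑ m ∈ Icc 1 (K - T), f (T + m) := by
  rw [show K = T + (K - T) by omega, ← map_add_left_Icc, sum_map, Nat.add_sub_cancel_left]
  rfl

lemma AntitoneOn.sum_mul_natCast_le {w : ℕ → ℝ} {M : ℕ} (hw : AntitoneOn w (Icc 1 M)) :
    ∑ m ∈ Icc 1 M, w m * m ≤ (∑ m ∈ Icc 1 M, w m) * (M + 1) / 2 := by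
  rcases Nat.eq_zero_or_pos M with rfl | hM
  · simp
  have hcheb := (hw.antivaryOn (g := fun m : ℕ => (m : ℝ))
    fun _ _ _ _ h => Nat.cast_le.mpr h).card_mul_sum_le_sum_mul_sum
  rw [Nat.card_Icc, Nat.add_sub_cancel, sum_Icc_one_natCast] at hcheb
  have hM' : (0 : ℝ) < M := Nat.cast_pos.mpr hM
  rw [mul_div_assoc, ← mul_assoc, mul_comm _ (M : ℝ), mul_assoc] at hcheb
  rw [mul_div_assoc]
  exact le_of_mul_le_mul_left hcheb hM'

lemma neg_log_sub_div_le {n : ℕ} (hn : 0 < n) {d S : ℝ} (hd1 : d < 1) (hS : 0 < S) :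
    -log ((n - d) / S) ≤ log S - if n = 1 then log (1 - d) else 0 := by
  have hnd : (0 : ℝ) < n - d := by
    have : (1 : ℝ) ≤ n := Nat.one_le_cast.mpr hn
    linarith
  rw [log_div hnd.ne' hS.ne']
  split_ifs with h
  · simp [h]
  · have : (2 : ℝ) ≤ n := by exact_mod_cast (by omega : 2 ≤ n)
    linarith [log_nonneg (by linarith : (1 : ℝ) ≤ n - d)]

lemma log_add_one_div_le_of_le {a b : ℝ} (hb : 0 < b) (hba : b ≤ a) :
    log ((a + 1) / a) ≤ log ((b + 1) / b) := by
  have ha : 0 < a := hb.trans_le hba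
  apply log_le_log (by positivity)
  rw [div_le_div_iff₀ ha hb]
  linarith

lemma neg_log_mul_prod_div_add_one_le {ι : Type*} (s : Finset ι) {c b : ℝ} {a : ι → ℝ}
    (hc : 0 < c) (hb : 0 < b) (hba : ∀ j ∈ s, b ≤ a j) :
    -log (c * ∏ j ∈ s, a j / (a j + 1)) ≤ -log c + #s * log ((b + 1) / b) := by
  have ha : ∀ j ∈ s, 0 < a j := fun j hj => hb.trans_le (hba j hj)
  have hfac : ∀ j ∈ s, 0 < a j / (a j + 1) := fun j hj => by have := ha j hj; positivity
  rw [log_mul hc.ne' (prod_pos hfac).ne', log_prod fun j hj => (hfac j hj).ne', neg_add,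
    ← sum_neg_distrib, ← nsmul_eq_mul]
  gcongr
  refine sum_le_card_nsmul _ _ _ fun j hj => ?_
  rw [← log_inv, inv_div]
  exact log_add_one_div_le_of_le hb (hba j hj)

lemma neg_log_mul_prod_pitmanYor_le (T m : ℕ) {d α S : ℝ} (hd0 : 0 ≤ d) (hd1 : d < 1)
    (hα : 0 < α) (hS : 0 < S) :
    -log ((1 - d) / S * ∏ j ∈ Icc 1 m,
        (α + ((T : ℝ) + (j : ℝ) - 1) * d) / (α + ((T : ℝ) + (j : ℝ) - 1) * d + 1)) ≤
      log S - log (1 - d) + m * log ((α + T * d + 1) / (α + T * d)) := by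
  have h1d : 0 < 1 - d := by linarith
  have hle : ∀ j ∈ Icc 1 m, α + T * d ≤ α + ((T : ℝ) + (j : ℝ) - 1) * d := fun j hj => by
    have : (1 : ℝ) ≤ j := Nat.one_le_cast.mpr (mem_Icc.mp hj).1
    nlinarith
  have := neg_log_mul_prod_div_add_one_le (Icc 1 m) (div_pos h1d hS) (by positivity) hle
  rwa [Nat.card_Icc, Nat.add_sub_cancel, log_div h1d.ne' hS.ne', neg_sub, sub_add_eq_add_sub,
    add_sub_right_comm] at this

lemma sum_mul_neg_log_le_of_eq_sub_div {ι : Type*} (s : Finset ι) {d S : ℝ} (hd1 : d < 1)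
    (hS : 0 < S) {p q : ι → ℝ} {n : ι → ℕ} (hp : ∀ i ∈ s, 0 ≤ p i) (hn : ∀ i ∈ s, 0 < n i)
    (hq : ∀ i ∈ s, q i = (n i - d) / S) :
    ∑ i ∈ s, p i * -log (q i) ≤
      (∑ i ∈ s, p i) * log S - (∑ i ∈ s, if n i = 1 then p i else 0) * log (1 - d) := by
  calc ∑ i ∈ s, p i * -log (q i)
      ≤ ∑ i ∈ s, p i * (log S - if n i = 1 then log (1 - d) else 0) :=
        sum_le_sum fun i hi => by
          rw [hq i hi]
          exact mul_le_mul_of_nonneg_left (neg_log_sub_div_le (hn i hi) hd1 hS) (hp i hi)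
    _ = _ := by
        rw [sum_mul, sum_mul, ← sum_sub_distrib]
        refine sum_congr rfl fun i _ => ?_
        split_ifs <;> ring

lemma AntitoneOn.sum_mul_le_of_le_add_mul {w f : ℕ → ℝ} {M : ℕ} (hw : AntitoneOn w (Icc 1 M))
    (hw0 : ∀ m ∈ Icc 1 M, 0 ≤ w m) {c L : ℝ} (hL : 0 ≤ L)
    (hf : ∀ m ∈ Icc 1 M, f m ≤ c + m * L) :
    ∑ m ∈ Icc 1 M, w m * f m ≤ (∑ m ∈ Icc 1 M, w m) * (c + (M + 1) / 2 * L) := by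
  calc ∑ m ∈ Icc 1 M, w m * f m
      ≤ ∑ m ∈ Icc 1 M, w m * (c + m * L) :=
        sum_le_sum fun m hm => mul_le_mul_of_nonneg_left (hf m hm) (hw0 m hm)
    _ = (∑ m ∈ Icc 1 M, w m) * c + (∑ m ∈ Icc 1 M, w m * m) * L := by
        rw [sum_mul, sum_mul, ← sum_add_distrib]
        exact sum_congr rfl fun m _ => by ring
    _ ≤ (∑ m ∈ Icc 1 M, w m) * c + (∑ m ∈ Icc 1 M, w m) * (M + 1) / 2 * L := by
        gcongr
        exact hw.sum_mul_natCast_le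
    _ = _ := by ring

theorem dpym_cross_entropy_upper_bound_general
    (K T N : ℕ) (hTK : T ≤ K)
    (d α : ℝ) (hd0 : 0 ≤ d) (hd1 : d < 1) (hα : 0 < α)
    (p : ℕ → ℝ) (hppos : ∀ i ∈ Finset.Icc 1 K, 0 < p i)
    (hpsum : ∑ i ∈ Finset.Icc 1 K, p i = 1)
    (hpmono : ∀ i j : ℕ, T + 1 ≤ i → i ≤ j → j ≤ K → p j ≤ p i)
    (n : ℕ → ℕ) (hnpos : ∀ i ∈ Finset.Icc 1 T, 0 < n i)
    (q : ℕ → ℝ)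
    (hq1 : ∀ i ∈ Finset.Icc 1 T, q i = ((n i : ℝ) - d) / ((N : ℝ) + α))
    (hq2 : ∀ i ∈ Finset.Icc 1 (K - T),
      q (T + i) =
        ((1 - d) / ((N : ℝ) + α)) *
          ∏ j ∈ Finset.Icc 1 i,
            (α + ((T : ℝ) + (j : ℝ) - 1) * d) / (α + ((T : ℝ) + (j : ℝ) - 1) * d + 1))
    (C₁ C₀ : ℝ)
    (hC₁ : C₁ = ∑ i ∈ Finset.Icc 1 T, if n i = 1 then p i else 0)
    (hC₀ : C₀ = ∑ i ∈ Finset.Icc (T + 1) K, p i) :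
    -∑ i ∈ Finset.Icc 1 K, p i * Real.log (q i) ≤
      Real.log ((N : ℝ) + α) - (C₁ + C₀) * Real.log (1 - d) +
        (C₀ / 2) * ((K : ℝ) - (T : ℝ) + 1) *
          Real.log ((α + (T : ℝ) * d + 1) / (α + (T : ℝ) * d)) := by
  have hS : (0 : ℝ) < N + α := by positivity
  have hL : 0 ≤ log ((α + T * d + 1) / (α + T * d)) :=
    log_nonneg <| (one_le_div (by positivity)).mpr (by linarith)
  have hp : ∀ i ∈ Icc 1 K, 0 ≤ p i := fun i hi => (hppos i hi).le
  have hp_tail : ∀ m ∈ Icc 1 (K - T), 0 ≤ p (T + m) := fun m hm => by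
    simp only [mem_Icc] at hm
    exact hp _ (mem_Icc.mpr ⟨by omega, by omega⟩)
  have hanti : AntitoneOn (fun m => p (T + m)) (Icc 1 (K - T)) := fun i hi j hj hij => by
    simp only [coe_Icc, Set.mem_Icc] at hi hj
    exact hpmono _ _ (by omega) (by omega) (by omega)
  have head := sum_mul_neg_log_le_of_eq_sub_div (Icc 1 T) hd1 hS
    (fun i hi => hp i (Icc_subset_Icc_right hTK hi)) hnpos hq1
  have tail := hanti.sum_mul_le_of_le_add_mul (f := fun m => -log (q (T + m))) hp_tail hL
    fun m hm => by
      rw [hq2 m hm]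
      exact neg_log_mul_prod_pitmanYor_le T m hd0 hd1 hα hS
  have hsplit : -∑ i ∈ Icc 1 K, p i * log (q i) =
      ∑ i ∈ Icc 1 T, p i * -log (q i) + ∑ m ∈ Icc 1 (K - T), p (T + m) * -log (q (T + m)) := by
    rw [← sum_Icc_succ_eq_sum_Icc_one (fun i => p i * -log (q i)) hTK,
      sum_Icc_one_add_sum_Icc_succ _ hTK, ← sum_neg_distrib]
    simp only [mul_neg]
  have hmass : ∑ i ∈ Icc 1 T, p i + C₀ = 1 := by
    rw [hC₀, sum_Icc_one_add_sum_Icc_succ _ hTK, hpsum]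
  rw [← sum_Icc_succ_eq_sum_Icc_one _ hTK, ← hC₀, Nat.cast_sub hTK] at tail
  rw [hsplit, hC₁]
  linear_combination head + tail + log (N + α) * hmass

/-- Upper bound on the cross entropy between the true distribution `p` and the
predictive probability vector `q` of the Dirichlet–Pitman–Yor mixture model. -/
theorem dpym_cross_entropy_upper_bound
    (K T N : ℕ) (hK : 0 < K) (hT : 0 < T) (hN : 0 < N) (hTK : T ≤ K)
    (d α : ℝ) (hd0 : 0 ≤ d) (hd1 : d < 1) (hα : 0 < α)
    (p : ℕ → ℝ) (hppos : ∀ i ∈ Finset.Icc 1 K, 0 < p i)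
    (hpsum : ∑ i ∈ Finset.Icc 1 K, p i = 1)
    (hpmono : ∀ i j : ℕ, T + 1 ≤ i → i ≤ j → j ≤ K → p j ≤ p i)
    (n : ℕ → ℕ) (hnpos : ∀ i ∈ Finset.Icc 1 T, 0 < n i)
    (hnsum : ∑ i ∈ Finset.Icc 1 T, n i = N)
    (q : ℕ → ℝ)
    (hq1 : ∀ i ∈ Finset.Icc 1 T, q i = ((n i : ℝ) - d) / ((N : ℝ) + α))
    (hq2 : ∀ i ∈ Finset.Icc 1 (K - T),
      q (T + i) =
        ((1 - d) / ((N : ℝ) + α)) *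
          ∏ j ∈ Finset.Icc 1 i,
            (α + ((T : ℝ) + (j : ℝ) - 1) * d) / (α + ((T : ℝ) + (j : ℝ) - 1) * d + 1))
    (C₁ C₀ : ℝ)
    (hC₁ : C₁ = ∑ i ∈ Finset.Icc 1 T, if n i = 1 then p i else 0)
    (hC₀ : C₀ = ∑ i ∈ Finset.Icc (T + 1) K, p i) :
    -∑ i ∈ Finset.Icc 1 K, p i * Real.log (q i) ≤
      Real.log ((N : ℝ) + α) - (C₁ + C₀) * Real.log (1 - d) +
        (C₀ / 2) * ((K : ℝ) - (T : ℝ) + 1) *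
          Real.log ((α + (T : ℝ) * d + 1) / (α + (T : ℝ) * d)) :=
  dpym_cross_entropy_upper_bound_general K T N hTK d α hd0 hd1 hα p hppos hpsum hpmono n hnpos q hq1
    hq2 C₁ C₀ hC₁ hC₀
end

section
/- Let T, N be positive reals, let C ∈ (0,1) and F > 0, and define f(d,α) = log(N+α) − C·log(1−d) + F·log((α+Td+1)/(α+Td)). Suppose d ∈ [0,1) and α are such that α + Td > 0 and N + α > 0, and suppose both partial derivatives of f vanish at (d,α), i.e., the function α' ↦ f(d,α') has derivative 0 at α' = α and the function d' ↦ f(d',α) has derivative 0 at d' = d. Then α = T(1−d)/C − N and a·d² + b·d + c = 0, where a = (C−1)²T², b = {(2T − 2CN + C)(C−1) + FC}·T and c = (T − CN + C)(T − CN) − TFC. -/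
/-!
With `P = α + T d`, the `α`-equation says `F / (P (P + 1)) = 1 / (N + α)`. Substituting this into
the `d`-equation `C / (1 - d) = T F / (P (P + 1))` gives `C (N + α) = T (1 - d)`, which is the
formula for `α`; putting that value of `α` into `P (P + 1) = F (N + α)` and clearing the
denominator `C²` gives the quadratic in `d`.
-/

theorem HasDerivAt.log_add_one_div {u : ℝ → ℝ} {u' x : ℝ} (hu : HasDerivAt u u' x)
    (h₀ : u x ≠ 0) (h₁ : u x + 1 ≠ 0) :
    HasDerivAt (fun t => Real.log ((u t + 1) / u t)) (-u' / (u x * (u x + 1))) x := by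
  refine (((hu.add_const 1).div hu h₀).log (div_ne_zero h₁ h₀)).congr_deriv ?_
  simp only [Pi.div_apply]
  field_simp
  ring

theorem upper_bound_critical_points_general
    (T N C F d α : ℝ) (hC0 : 0 < C)
    (hd1 : d < 1)
    (hpos1 : 0 < α + T * d) (hpos2 : 0 < N + α)
    (hcritα : HasDerivAt
      (fun α' : ℝ =>
        Real.log (N + α') - C * Real.log (1 - d) +
          F * Real.log ((α' + T * d + 1) / (α' + T * d))) 0 α)
    (hcritd : HasDerivAt
      (fun d' : ℝ =>
        Real.log (N + α) - C * Real.log (1 - d') +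
          F * Real.log ((α + T * d' + 1) / (α + T * d'))) 0 d) :
    α = T * (1 - d) / C - N ∧
      ((C - 1) ^ 2 * T ^ 2) * d ^ 2 +
          (((2 * T - 2 * C * N + C) * (C - 1) + F * C) * T) * d +
          ((T - C * N + C) * (T - C * N) - T * F * C) = 0 := by
  have hP₀ := hpos1.ne'
  have hP₁ : α + T * d + 1 ≠ 0 := by positivity
  have hd : 1 - d ≠ 0 := by linarith
  have eα : 1 / (N + α) + F * (-1 / ((α + T * d) * (α + T * d + 1))) = 0 :=
    (((((hasDerivAt_id' α).const_add N).log hpos2.ne').sub_const _).add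
      ((((hasDerivAt_id' α).add_const (T * d)).log_add_one_div hP₀ hP₁).const_mul F)).unique
      hcritα
  have ed : -(C * (-1 / (1 - d))) + F * (-T / ((α + T * d) * (α + T * d + 1))) = 0 := by
    have := (((((hasDerivAt_id' d).const_sub 1).log hd).const_mul C).const_sub (Real.log (N + α))).add
      (((((hasDerivAt_id' d).const_mul T).const_add α).log_add_one_div hP₀ hP₁).const_mul F)
    simpa only [mul_one] using this.unique hcritd
  have hcross : (α + T * d) * (α + T * d + 1) = F * (N + α) := by
    field_simp at eα
    linear_combination eα
  have hmass : C * (N + α) = T * (1 - d) := by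
    have : C / (1 - d) = T / (N + α) := by linear_combination ed - T * eα
    field_simp at this
    linear_combination this
  refine ⟨by field_simp; linear_combination hmass, ?_⟩
  linear_combination C ^ 2 * hcross -
    (T - C * N + (C - 1) * T * d + C * (α + T * d) + C - C * F) * hmass

/-- Characterization of the critical points of the cross-entropy upper bound
function of the Dirichlet–Pitman–Yor mixture model. -/
theorem upper_bound_critical_points
    (T N C F d α : ℝ) (hT : 0 < T) (hN : 0 < N) (hC0 : 0 < C) (hC1 : C < 1)
    (hF : 0 < F) (hd0 : 0 ≤ d) (hd1 : d < 1)
    (hpos1 : 0 < α + T * d) (hpos2 : 0 < N + α)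
    (hcritα : HasDerivAt
      (fun α' : ℝ =>
        Real.log (N + α') - C * Real.log (1 - d) +
          F * Real.log ((α' + T * d + 1) / (α' + T * d))) 0 α)
    (hcritd : HasDerivAt
      (fun d' : ℝ =>
        Real.log (N + α) - C * Real.log (1 - d') +
          F * Real.log ((α + T * d' + 1) / (α + T * d'))) 0 d) :
    α = T * (1 - d) / C - N ∧
      ((C - 1) ^ 2 * T ^ 2) * d ^ 2 +
          (((2 * T - 2 * C * N + C) * (C - 1) + F * C) * T) * d +
          ((T - C * N + C) * (T - C * N) - T * F * C) = 0 :=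
  upper_bound_critical_points_general T N C F d α hC0 hd1 hpos1 hpos2 hcritα hcritd
end

section
/- Let (p_k)_{k≥1} be positive reals with ∑_{k=1}^{∞} p_k = 1, and suppose there exists n_0 such that p_{n+1} ≤ p_n for all n ≥ n_0. Define the tail function F̄(z) = ∑_{k : k ≥ z} p_k for z > 0 (the sum over all positive integers k with k ≥ z). Let ρ > 0 and assume that for every λ > 0, F̄(λz)/F̄(z) → λ^{−ρ} as z → ∞. Define f(t) = p_{⌈t⌉} for t > 0. Then for every λ > 0, f(λt)/f(t) → λ^{−(ρ+1)} as t → ∞. -/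
/-!
Write `F̄(z) = T ⌈z⌉` with `T n = ∑_{k ≥ n} p k`. Once `p` is antitone, `T n - T m` lies between
`(m - n) p m` and `(m - n) p n`, so for `b > 1 > c` the increments `F̄ t - F̄ (b t)` and
`F̄ (c t) - F̄ t` bound `f t` from below and above, up to an error `O(f t)`. Dividing by `F̄ t` and
letting `t → ∞`, regular variation squeezes `t f(t) / F̄(t)` between `(1 - b^(-ρ)) / (b - 1)` and
`(1 - c^(-ρ)) / (c - 1)`, which both tend to `ρ` (the derivative of `-x^(-ρ)` at `1`) as
`b, c → 1`. Hence `t f(t) / F̄(t) → ρ`, and then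
`f(λt) / f(t) = (λt f(λt) / F̄(λt)) / (t f(t) / F̄(t)) · F̄(λt) / F̄(t) · λ⁻¹ → λ^(-ρ-1)`.
-/

open Filter Topology

theorem tendsto_div_mul_add_atTop {c : ℝ} (d : ℝ) (hc : 0 < c) :
    Tendsto (fun t : ℝ => t / (c * t + d)) atTop (𝓝 c⁻¹) := by
  have hlim : Tendsto (fun t : ℝ => (c + d * t⁻¹)⁻¹) atTop (𝓝 (c + d * 0)⁻¹) :=
    (tendsto_const_nhds.add (tendsto_inv_atTop_zero.const_mul d)).inv₀ (by simpa using hc.ne')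
  rw [mul_zero, add_zero] at hlim
  refine hlim.congr' ?_
  filter_upwards [eventually_gt_atTop 0] with t ht
  field_simp

theorem tendsto_one_sub_rpow_neg_div_sub_one (ρ : ℝ) :
    Tendsto (fun x : ℝ => (1 - x ^ (-ρ)) / (x - 1)) (𝓝[≠] 1) (𝓝 ρ) := by
  have hderiv : HasDerivAt (fun x : ℝ => x ^ (-ρ)) (-ρ) 1 := by
    simpa using Real.hasDerivAt_rpow_const (x := 1) (p := -ρ) (Or.inl one_ne_zero)
  have hslope := (hasDerivAt_iff_tendsto_slope.mp hderiv).neg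
  rw [neg_neg] at hslope
  refine hslope.congr fun x => ?_
  rw [slope_def_field, Real.one_rpow, ← neg_div, neg_sub]

def IsRegularlyVarying (g : ℝ → ℝ) (σ : ℝ) : Prop :=
  ∀ l : ℝ, 0 < l → Tendsto (fun x : ℝ => g (l * x) / g x) atTop (𝓝 (l ^ σ))

namespace IsRegularlyVarying

variable {F f g : ℝ → ℝ} {σ ρ : ℝ}

theorem congr' (hg : IsRegularlyVarying g σ) (hgf : g =ᶠ[atTop] f) :
    IsRegularlyVarying f σ := by
  intro l hl
  have hscaled : (fun x => g (l * x)) =ᶠ[atTop] fun x => f (l * x) :=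
    hgf.comp_tendsto (tendsto_id.const_mul_atTop hl)
  exact (hg l hl).congr' (hscaled.div hgf)

theorem eventually_lt_mul_div (hF : IsRegularlyVarying F (-ρ))
    (hFpos : ∀ᶠ t in atTop, 0 < F t)
    (hlower : ∀ b, 1 < b → ∀ᶠ t in atTop, F t - F (b * t) ≤ ((b - 1) * t + 1) * f t)
    {a : ℝ} (ha : a < ρ) : ∀ᶠ t in atTop, a < t * f t / F t := by
  obtain ⟨b, hab, hb⟩ : ∃ b : ℝ, a < (1 - b ^ (-ρ)) / (b - 1) ∧ 1 < b :=
    (((tendsto_one_sub_rpow_neg_div_sub_one ρ).mono_left (nhdsGT_le_nhdsNE 1)).eventually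
      (eventually_gt_nhds ha) |>.and self_mem_nhdsWithin).exists
  have hb1 : 0 < b - 1 := sub_pos.2 hb
  have hlim : Tendsto (fun t => (1 - F (b * t) / F t) * (t / ((b - 1) * t + 1))) atTop
      (𝓝 ((1 - b ^ (-ρ)) / (b - 1))) := by
    rw [div_eq_mul_inv]
    exact (tendsto_const_nhds.sub (hF b (by linarith))).mul (tendsto_div_mul_add_atTop 1 hb1)
  filter_upwards [hlim.eventually (eventually_gt_nhds hab), hlower b hb, hFpos,
    eventually_gt_atTop 0] with t hat hbound hFt ht
  refine hat.trans_le ?_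
  rw [one_sub_div hFt.ne', div_mul_div_comm, div_le_div_iff₀ (by positivity) hFt]
  nlinarith [mul_le_mul_of_nonneg_right hbound (mul_pos ht hFt).le]

theorem eventually_mul_div_lt (hF : IsRegularlyVarying F (-ρ))
    (hFpos : ∀ᶠ t in atTop, 0 < F t)
    (hupper : ∀ c ∈ Set.Ioo (0 : ℝ) 1,
      ∀ᶠ t in atTop, ((1 - c) * t - 1) * f t ≤ F (c * t) - F t)
    {a : ℝ} (ha : ρ < a) : ∀ᶠ t in atTop, t * f t / F t < a := by
  obtain ⟨c, hca, hc⟩ : ∃ c : ℝ, (1 - c ^ (-ρ)) / (c - 1) < a ∧ c ∈ Set.Ioo 0 1 :=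
    (((tendsto_one_sub_rpow_neg_div_sub_one ρ).mono_left (nhdsLT_le_nhdsNE 1)).eventually
      (eventually_lt_nhds ha) |>.and (Ioo_mem_nhdsLT one_pos)).exists
  have h1c : 0 < 1 - c := sub_pos.2 hc.2
  have hlim : Tendsto (fun t => (F (c * t) / F t - 1) * (t / ((1 - c) * t - 1))) atTop
      (𝓝 ((1 - c ^ (-ρ)) / (c - 1))) := by
    convert ((hF c hc.1).sub_const 1).mul (tendsto_div_mul_add_atTop (-1) h1c) using 1
    · simp only [sub_eq_add_neg]
    · rw [← neg_sub 1 c, div_neg, ← neg_div, neg_sub, div_eq_mul_inv]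
  have hD : ∀ᶠ t in atTop, 0 < (1 - c) * t - 1 := by
    filter_upwards [eventually_gt_atTop (1 - c)⁻¹] with t ht
    nlinarith [mul_lt_mul_of_pos_left ht h1c, mul_inv_cancel₀ h1c.ne']
  filter_upwards [hlim.eventually (eventually_lt_nhds hca), hupper c hc, hFpos, hD,
    eventually_gt_atTop 0] with t hat hbound hFt hDt ht
  refine lt_of_le_of_lt ?_ hat
  rw [div_sub_one hFt.ne', div_mul_div_comm, div_le_div_iff₀ hFt (by positivity)]
  nlinarith [mul_le_mul_of_nonneg_right hbound (mul_pos ht hFt).le]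

theorem tendsto_mul_div_of_increment_bounds (hF : IsRegularlyVarying F (-ρ))
    (hFpos : ∀ᶠ t in atTop, 0 < F t)
    (hlower : ∀ b, 1 < b → ∀ᶠ t in atTop, F t - F (b * t) ≤ ((b - 1) * t + 1) * f t)
    (hupper : ∀ c ∈ Set.Ioo (0 : ℝ) 1,
      ∀ᶠ t in atTop, ((1 - c) * t - 1) * f t ≤ F (c * t) - F t) :
    Tendsto (fun t => t * f t / F t) atTop (𝓝 ρ) :=
  tendsto_order.2 ⟨fun _ ha => hF.eventually_lt_mul_div hFpos hlower ha,
    fun _ ha => hF.eventually_mul_div_lt hFpos hupper ha⟩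

theorem of_tendsto_mul_div (hF : IsRegularlyVarying F (-ρ)) (hρ : ρ ≠ 0)
    (hdensity : Tendsto (fun t => t * f t / F t) atTop (𝓝 ρ)) :
    IsRegularlyVarying f (-(ρ + 1)) := by
  intro l hl
  have hscaled : Tendsto (fun t => l * t * f (l * t) / F (l * t)) atTop (𝓝 ρ) :=
    hdensity.comp (tendsto_id.const_mul_atTop hl)
  have hlim := ((hscaled.div hdensity hρ).mul (hF l hl)).div_const l
  rw [div_self hρ, one_mul, ← Real.rpow_sub_one hl.ne', ← neg_add'] at hlim
  refine hlim.congr' ?_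
  filter_upwards [hdensity.eventually_ne hρ, hscaled.eventually_ne hρ] with t ht hlt
  simp only [ne_eq, div_eq_zero_iff, mul_eq_zero, not_or] at ht hlt
  obtain ⟨⟨ht0, hft⟩, hFt⟩ := ht
  obtain ⟨⟨-, hflt⟩, hFlt⟩ := hlt
  simp only [Pi.div_apply]
  field_simp

end IsRegularlyVarying

noncomputable def tailSum (p : ℕ → ℝ) (n : ℕ) : ℝ := ∑' i, p (i + n)

section TailSum

variable {p : ℕ → ℝ} {N n m : ℕ}

theorem tailSum_sub_tailSum (hp : Summable p) (hnm : n ≤ m) :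
    tailSum p n - tailSum p m = ∑ j ∈ Finset.Ico n m, p j := by
  obtain ⟨d, rfl⟩ := Nat.exists_eq_add_of_le hnm
  rw [Finset.sum_Ico_eq_sum_range, Nat.add_sub_cancel_left, tailSum, tailSum,
    ← ((summable_nat_add_iff n).2 hp).sum_add_tsum_nat_add d]
  simp only [add_comm, add_left_comm, add_sub_cancel_right]

theorem tailSum_pos (hp : Summable p) (hpos : ∀ k, n ≤ k → 0 < p k) : 0 < tailSum p n :=
  ((summable_nat_add_iff n).2 hp).tsum_pos (fun i => (hpos _ (Nat.le_add_left n i)).le) 0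
    (hpos _ (Nat.le_add_left n 0))

theorem tailSum_sub_le (hp : Summable p) (hanti : AntitoneOn p (Set.Ici N)) (hN : N ≤ n)
    (hnm : n ≤ m) : tailSum p n - tailSum p m ≤ ((m : ℝ) - n) * p n := by
  have hle := Finset.sum_le_card_nsmul (Finset.Ico n m) p (p n) fun j hj =>
    hanti hN (hN.trans (Finset.mem_Ico.1 hj).1) (Finset.mem_Ico.1 hj).1
  rwa [Nat.card_Ico, nsmul_eq_mul, Nat.cast_sub hnm, ← tailSum_sub_tailSum hp hnm] at hle

theorem le_tailSum_sub (hp : Summable p) (hanti : AntitoneOn p (Set.Ici N)) (hN : N ≤ n)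
    (hnm : n ≤ m) : ((m : ℝ) - n) * p m ≤ tailSum p n - tailSum p m := by
  have hle := Finset.card_nsmul_le_sum (Finset.Ico n m) p (p m) fun j hj =>
    hanti (hN.trans (Finset.mem_Ico.1 hj).1) (hN.trans hnm) (Finset.mem_Ico.1 hj).2.le
  rwa [Nat.card_Ico, nsmul_eq_mul, Nat.cast_sub hnm, ← tailSum_sub_tailSum hp hnm] at hle

variable {x y : ℝ}

theorem tailSum_ceil_sub_le (hp : Summable p) (hanti : AntitoneOn p (Set.Ici N))
    (hx : (N : ℝ) ≤ x) (hxy : x ≤ y) (hpx : 0 ≤ p ⌈x⌉₊) :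
    tailSum p ⌈x⌉₊ - tailSum p ⌈y⌉₊ ≤ (y - x + 1) * p ⌈x⌉₊ := by
  have hx0 : 0 ≤ x := N.cast_nonneg.trans hx
  refine (tailSum_sub_le hp hanti (by exact_mod_cast hx.trans (Nat.le_ceil x))
    (Nat.ceil_mono hxy)).trans (mul_le_mul_of_nonneg_right ?_ hpx)
  linarith [Nat.ceil_lt_add_one (hx0.trans hxy), Nat.le_ceil x]

theorem le_tailSum_ceil_sub (hp : Summable p) (hanti : AntitoneOn p (Set.Ici N))
    (hx : (N : ℝ) ≤ x) (hxy : x ≤ y) (hpy : 0 ≤ p ⌈y⌉₊) :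
    (y - x - 1) * p ⌈y⌉₊ ≤ tailSum p ⌈x⌉₊ - tailSum p ⌈y⌉₊ := by
  have hx0 : 0 ≤ x := N.cast_nonneg.trans hx
  refine (mul_le_mul_of_nonneg_right ?_ hpy).trans (le_tailSum_sub hp hanti
    (by exact_mod_cast hx.trans (Nat.le_ceil x)) (Nat.ceil_mono hxy))
  linarith [Nat.ceil_lt_add_one hx0, Nat.le_ceil y]

theorem tsum_ite_le_add_one_eq_tailSum_ceil (hp : Summable p) (hx : 0 < x) :
    ∑' k : ℕ, (if x ≤ (k : ℝ) + 1 then p (k + 1) else 0) = tailSum p ⌈x⌉₊ := by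
  obtain ⟨m, hm⟩ := Nat.exists_eq_add_of_le' (Nat.one_le_ceil_iff.2 hx)
  have hcond : ∀ k : ℕ, x ≤ (k : ℝ) + 1 ↔ m ≤ k := fun k => by
    rw [← Nat.cast_add_one, ← Nat.ceil_le, hm, Nat.add_le_add_iff_right]
  simp_rw [hcond]
  have hs : Summable fun k => if m ≤ k then p (k + 1) else 0 :=
    (summable_nat_add_iff m).1 (by simpa [add_assoc] using (summable_nat_add_iff (m + 1)).2 hp)
  rw [← hs.sum_add_tsum_nat_add m, Finset.sum_eq_zero fun k hk => if_neg (by simpa using hk),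
    zero_add, hm, tailSum]
  simp [add_assoc]

theorem tendsto_mul_ceil_div_tailSum_ceil {ρ : ℝ} (hp : Summable p)
    (hanti : AntitoneOn p (Set.Ici N)) (hpos : ∀ k, 1 ≤ k → 0 < p k)
    (hrv : IsRegularlyVarying (fun z => tailSum p ⌈z⌉₊) (-ρ)) :
    Tendsto (fun t => t * p ⌈t⌉₊ / tailSum p ⌈t⌉₊) atTop (𝓝 ρ) := by
  have hceil_pos : ∀ x : ℝ, 0 < x → 0 < p ⌈x⌉₊ := fun x hx => hpos _ (Nat.one_le_ceil_iff.2 hx)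
  refine hrv.tendsto_mul_div_of_increment_bounds ?_ (fun b hb => ?_) (fun c hc => ?_)
  · filter_upwards [eventually_gt_atTop 0] with t ht
    exact tailSum_pos hp fun k hk => hpos k ((Nat.one_le_ceil_iff.2 ht).trans hk)
  · filter_upwards [eventually_ge_atTop (N : ℝ), eventually_gt_atTop 0] with t htN ht
    convert tailSum_ceil_sub_le hp hanti htN (le_mul_of_one_le_left ht.le hb.le)
      (hceil_pos t ht).le using 2
    ring
  · filter_upwards [eventually_ge_atTop (N / c), eventually_gt_atTop 0] with t htN ht
    convert le_tailSum_ceil_sub hp hanti ((div_le_iff₀' hc.1).1 htN)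
      (mul_le_of_le_one_left ht.le hc.2.le) (hceil_pos t ht).le using 2
    ring

end TailSum

/-- If the tail function of an eventually monotone discrete distribution is
regularly varying with index `-ρ`, then the associated step function of the
probability mass function is regularly varying with index `-(ρ+1)`. -/
theorem pmf_regularly_varying_of_tail
    (p : ℕ → ℝ) (hp : ∀ k : ℕ, 1 ≤ k → 0 < p k)
    (hsum : HasSum (fun k : ℕ => p (k + 1)) 1)
    (hmono : ∃ n0 : ℕ, ∀ n : ℕ, n0 ≤ n → p (n + 1) ≤ p n)
    (Fbar : ℝ → ℝ)
    (hFbar : ∀ z : ℝ, 0 < z →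
      Fbar z = ∑' k : ℕ, if z ≤ ((k : ℝ) + 1) then p (k + 1) else 0)
    (ρ : ℝ) (hρ : 0 < ρ)
    (hrv : ∀ l : ℝ, 0 < l →
      Tendsto (fun z : ℝ => Fbar (l * z) / Fbar z) atTop (nhds (l ^ (-ρ))))
    (f : ℝ → ℝ) (hf : ∀ t : ℝ, 0 < t → f t = p ⌈t⌉₊) :
    ∀ l : ℝ, 0 < l →
      Tendsto (fun t : ℝ => f (l * t) / f t) atTop (nhds (l ^ (-(ρ + 1)))) := by
  obtain ⟨n0, hmono⟩ := hmono
  have hS : Summable p := (summable_nat_add_iff 1).1 hsum.summable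
  have hFbar_eq : Fbar =ᶠ[atTop] fun z => tailSum p ⌈z⌉₊ := by
    filter_upwards [eventually_gt_atTop 0] with z hz
    rw [hFbar z hz, tsum_ite_le_add_one_eq_tailSum_ceil hS hz]
  have hf_eq : (fun t => p ⌈t⌉₊) =ᶠ[atTop] f := by
    filter_upwards [eventually_gt_atTop 0] with t ht using (hf t ht).symm
  have hrv_tail := IsRegularlyVarying.congr' hrv hFbar_eq
  have hdensity :=
    tendsto_mul_ceil_div_tailSum_ceil hS (antitoneOn_nat_Ici_of_succ_le hmono) hp hrv_tail
  exact (hrv_tail.of_tendsto_mul_div hρ.ne' hdensity).congr' hf_eq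
end

section
/- Let (p_k)_{k≥1} be positive reals with ∑_{k=1}^{∞} p_k = 1, and suppose there exists n_0 such that p_{n+1} ≤ p_n for all n ≥ n_0. Let ρ > 1, define f(t) = p_{⌈t⌉} for t > 0, and assume that for every λ > 0, f(λt)/f(t) → λ^{−ρ} as t → ∞. Then the series ∑_{k=1}^{∞} p_k·log p_k converges absolutely; equivalently, the Shannon entropy H = −∑_{k=1}^{∞} p_k log p_k is finite. -/
/-!
Regular variation with index `-ρ` gives `p (2 n) / p n → 2 ^ (-ρ)`, so eventually
`p (2 n) ≤ 2 ^ (-s) p n` for a fixed `1 < s < ρ`. Iterating along `2 ^ j N` and using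
monotonicity between consecutive dyadic points yields `p n = O(n ^ (-s))`. Since
`x log x = o(x ^ a)` as `x → 0⁺` for every `a < 1`, choosing `a` with `a s > 1` makes
`p n log p n` dominated by the summable `n ^ (-a s)`.
-/

open Filter Asymptotics Real Topology Set

lemma mul_log_isLittleO_rpow_nhdsGT_zero {a : ℝ} (ha : a < 1) :
    (fun x : ℝ => x * log x) =o[𝓝[>] 0] fun x => x ^ a := by
  have h := (isBigO_refl (fun x : ℝ => x) _).mul_isLittleO
    (isLittleO_log_rpow_nhdsGT_zero (sub_neg.2 ha))
  refine h.congr' EventuallyEq.rfl ?_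
  filter_upwards [self_mem_nhdsWithin] with x (hx : 0 < x)
  rw [rpow_sub_one hx.ne']
  field_simp

lemma summable_mul_log_of_isBigO_rpow {p : ℕ → ℝ} {s : ℝ} (hs : 1 < s)
    (hpos : ∀ᶠ n in atTop, 0 < p n) (hp : p =O[atTop] fun n => (n : ℝ) ^ (-s)) :
    Summable fun n => p n * log (p n) := by
  have hs0 : 0 < s := by linarith
  obtain ⟨a, hsa, ha1⟩ := exists_between ((div_lt_one hs0).2 hs)
  have ha0 : 0 ≤ a := ((one_div_pos.2 hs0).trans hsa).le
  have has : 1 < s * a := (div_lt_iff₀' hs0).1 hsa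
  have hp0 : Tendsto p atTop (𝓝[>] 0) :=
    tendsto_nhdsWithin_iff.2 ⟨hp.trans_tendsto
      ((tendsto_rpow_neg_atTop hs0).comp tendsto_natCast_atTop_atTop), hpos⟩
  have hlog := ((mul_log_isLittleO_rpow_nhdsGT_zero ha1).comp_tendsto hp0).isBigO
  have hpow := hp.rpow ha0 (Eventually.of_forall fun n => by positivity)
  refine summable_of_isBigO_nat (summable_nat_rpow.2 (neg_lt_neg has)) (hlog.trans ?_)
  refine hpow.congr' EventuallyEq.rfl (Eventually.of_forall fun n => ?_)
  simp only [← rpow_mul n.cast_nonneg, neg_mul]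

lemma apply_two_pow_mul_le_pow_mul {p : ℕ → ℝ} {c : ℝ} {N : ℕ} (hc : 0 ≤ c)
    (h : ∀ n ≥ N, p (2 * n) ≤ c * p n) (j : ℕ) : p (2 ^ j * N) ≤ c ^ j * p N := by
  induction j with
  | zero => simp
  | succ j ih =>
    calc p (2 ^ (j + 1) * N) = p (2 * (2 ^ j * N)) := by rw [pow_succ']; ring_nf
      _ ≤ c * p (2 ^ j * N) := h _ (Nat.le_mul_of_pos_left N (by positivity))
      _ ≤ c ^ (j + 1) * p N := by rw [pow_succ', mul_assoc]; gcongr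

lemma le_mul_rpow_neg_of_two_mul_le {p : ℕ → ℝ} {s : ℝ} {N : ℕ} (hs : 0 ≤ s) (hN : 0 < N)
    (hanti : AntitoneOn p (Ici N)) (hpN : 0 ≤ p N)
    (h : ∀ n ≥ N, p (2 * n) ≤ 2 ^ (-s) * p n) {n : ℕ} (hn : N ≤ n) :
    p n ≤ (2 * N : ℝ) ^ s * p N * (n : ℝ) ^ (-s) := by
  set j := Nat.log 2 (n / N)
  have hlo : 2 ^ j * N ≤ n :=
    (Nat.le_div_iff_mul_le hN).1 (Nat.pow_log_le_self 2 (Nat.div_pos hn hN).ne')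
  have hhi : n ≤ 2 ^ j * (2 * N) := by
    have := (Nat.div_lt_iff_lt_mul hN).1 (Nat.lt_pow_succ_log_self one_lt_two (n / N))
    rw [pow_succ] at this; linarith
  have hn0 : (0 : ℝ) < n := by exact_mod_cast hN.trans_le hn
  have hpow : ((2 : ℝ) ^ j) ^ (-s) ≤ (2 * N : ℝ) ^ s * (n : ℝ) ^ (-s) :=
    calc ((2 : ℝ) ^ j) ^ (-s) = (2 * N : ℝ) ^ s * ((2 : ℝ) ^ j * (2 * N)) ^ (-s) := by
          rw [mul_rpow (x := (2 : ℝ) ^ j) (by positivity) (by positivity),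
            rpow_neg (x := (2 * N : ℝ)) (by positivity)]
          field_simp
      _ ≤ (2 * N : ℝ) ^ s * (n : ℝ) ^ (-s) := by
          have hhi' : (n : ℝ) ≤ 2 ^ j * (2 * N) := by exact_mod_cast hhi
          exact mul_le_mul_of_nonneg_left (rpow_le_rpow_of_nonpos hn0 hhi' (neg_nonpos.2 hs))
            (by positivity)
  calc p n ≤ p (2 ^ j * N) :=
        hanti (Nat.le_mul_of_pos_left N (by positivity)) hn hlo
    _ ≤ (2 ^ (-s)) ^ j * p N := apply_two_pow_mul_le_pow_mul (by positivity) h j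
    _ = ((2 : ℝ) ^ j) ^ (-s) * p N := by
        rw [← rpow_mul_natCast zero_le_two, ← rpow_natCast, ← rpow_mul zero_le_two,
          mul_comm (j : ℝ)]
    _ ≤ (2 * N : ℝ) ^ s * (n : ℝ) ^ (-s) * p N := by gcongr
    _ = _ := by ring

lemma isBigO_rpow_neg_of_two_mul_le {p : ℕ → ℝ} {s : ℝ} {n₀ : ℕ} (hs : 0 ≤ s)
    (hanti : AntitoneOn p (Ici n₀)) (hpos : ∀ᶠ n in atTop, 0 ≤ p n)
    (h : ∀ᶠ n in atTop, p (2 * n) ≤ 2 ^ (-s) * p n) :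
    p =O[atTop] fun n => (n : ℝ) ^ (-s) := by
  obtain ⟨N, hN⟩ := (hpos.and (h.and (eventually_ge_atTop (max n₀ 1)))).exists_forall_of_atTop
  have hN₀ : max n₀ 1 ≤ N := (hN N le_rfl).2.2
  refine IsBigO.of_bound ((2 * N : ℝ) ^ s * p N) ?_
  filter_upwards [eventually_ge_atTop N] with n hn
  rw [norm_of_nonneg (hN n hn).1, norm_of_nonneg (by positivity)]
  exact le_mul_rpow_neg_of_two_mul_le hs (by omega) (hanti.mono (Ici_subset_Ici.2 (by omega)))
    (hN N le_rfl).1 (fun m hm => (hN m hm).2.1) hn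

lemma tendsto_div_two_mul_of_eq_ceil {p : ℕ → ℝ} {f : ℝ → ℝ} {L : ℝ}
    (hf : ∀ t : ℝ, 0 < t → f t = p ⌈t⌉₊)
    (h : Tendsto (fun t : ℝ => f (2 * t) / f t) atTop (𝓝 L)) :
    Tendsto (fun n : ℕ => p (2 * n) / p n) atTop (𝓝 L) := by
  refine (h.comp tendsto_natCast_atTop_atTop).congr' ?_
  filter_upwards [eventually_gt_atTop 0] with n hn
  have hn' : (0 : ℝ) < n := by exact_mod_cast hn
  simp only [Function.comp_apply, hf _ hn', hf _ (by positivity : (0 : ℝ) < 2 * n)]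
  rw [← Nat.cast_ofNat, ← Nat.cast_mul, Nat.ceil_natCast, Nat.ceil_natCast]

theorem entropy_summable_of_regularly_varying_general
    (p : ℕ → ℝ) (hp : ∀ k : ℕ, 1 ≤ k → 0 < p k)
    (hmono : ∃ n0 : ℕ, ∀ n : ℕ, n0 ≤ n → p (n + 1) ≤ p n)
    (ρ : ℝ) (hρ : 1 < ρ)
    (f : ℝ → ℝ) (hf : ∀ t : ℝ, 0 < t → f t = p ⌈t⌉₊)
    (hrv : ∀ l : ℝ, 0 < l →
      Tendsto (fun t : ℝ => f (l * t) / f t) atTop (nhds (l ^ (-ρ)))) :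
    Summable (fun k : ℕ => p (k + 1) * Real.log (p (k + 1))) := by
  obtain ⟨n0, hmono⟩ := hmono
  have hpos : ∀ᶠ n in atTop, 0 < p n := eventually_atTop.2 ⟨1, hp⟩
  obtain ⟨s, hs1, hsρ⟩ := exists_between hρ
  have hdbl : ∀ᶠ n in atTop, p (2 * n) ≤ 2 ^ (-s) * p n := by
    have hlt : (2 : ℝ) ^ (-ρ) < 2 ^ (-s) := rpow_lt_rpow_of_exponent_lt one_lt_two (neg_lt_neg hsρ)
    filter_upwards [(tendsto_div_two_mul_of_eq_ceil hf (hrv 2 two_pos)).eventually_lt_const hlt,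
      hpos] with n hratio hn
    exact (div_le_iff₀ hn).1 hratio.le
  have hO : p =O[atTop] fun n => (n : ℝ) ^ (-s) :=
    isBigO_rpow_neg_of_two_mul_le (by linarith) (antitoneOn_nat_Ici_of_succ_le hmono)
      (hpos.mono fun _ => le_of_lt) hdbl
  exact (summable_nat_add_iff 1).2 (summable_mul_log_of_isBigO_rpow hs1 hpos hO)

/-- If the step function of an eventually monotone probability mass function is
regularly varying with index `-ρ` for some `ρ > 1`, then the Shannon entropy is
finite, i.e. `k ↦ p_k log p_k` is summable. -/
theorem entropy_summable_of_regularly_varying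
    (p : ℕ → ℝ) (hp : ∀ k : ℕ, 1 ≤ k → 0 < p k)
    (hsum : HasSum (fun k : ℕ => p (k + 1)) 1)
    (hmono : ∃ n0 : ℕ, ∀ n : ℕ, n0 ≤ n → p (n + 1) ≤ p n)
    (ρ : ℝ) (hρ : 1 < ρ)
    (f : ℝ → ℝ) (hf : ∀ t : ℝ, 0 < t → f t = p ⌈t⌉₊)
    (hrv : ∀ l : ℝ, 0 < l →
      Tendsto (fun t : ℝ => f (l * t) / f t) atTop (nhds (l ^ (-ρ)))) :
    Summable (fun k : ℕ => p (k + 1) * Real.log (p (k + 1))) :=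
  entropy_summable_of_regularly_varying_general p hp hmono ρ hρ f hf hrv
end

section
/- Let (p_k)_{k≥1} be positive reals with ∑_{k=1}^{∞} p_k = 1, and suppose there exists n_0 such that p_{n+1} ≤ p_n for all n ≥ n_0. Define f(t) = p_{⌈t⌉} for t > 0, and assume that for every λ > 0, f(λt)/f(t) → λ^{−1} as t → ∞ (regular variation with index −1). Then the series ∑_{k=1}^{∞} p_k·log p_k is summable if and only if the series ∑_{k=1}^{∞} p_k·log k is summable. -/
/-!
Regular variation with index `-1`, evaluated at `λ = 2` along `t = 2^j`, gives
`p (2^(j+1)) / p (2^j) → 1/2`, so by Cesàro `log p (2^n) / n → -log 2`. Eventual monotonicity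
squeezes `p k` between `p (2^(m+1))` and `p (2^m)` for `m = ⌊log₂ k⌋`, whence
`log p k / log k → -1`. Thus `p k log p k ~ -p k log k`, and the two series are comparable.
-/

open Filter Real Topology Asymptotics

lemma tendsto_div_natCast_of_tendsto_sub {v : ℕ → ℝ} {L : ℝ}
    (h : Tendsto (fun n => v (n + 1) - v n) atTop (𝓝 L)) :
    Tendsto (fun n : ℕ => v n / n) atTop (𝓝 L) := by
  have hshift : Tendsto (fun n : ℕ => (v n - v 0) / n) atTop (𝓝 L) :=
    h.cesaro.congr fun n => by rw [Finset.sum_range_sub, inv_mul_eq_div]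
  simpa [sub_div] using hshift.add (tendsto_const_div_atTop_nhds_zero_nat (v 0))

lemma tendsto_succ_div_natCast_of_tendsto_sub {v : ℕ → ℝ} {L : ℝ}
    (h : Tendsto (fun n => v (n + 1) - v n) atTop (𝓝 L)) :
    Tendsto (fun n : ℕ => v (n + 1) / n) atTop (𝓝 L) := by
  have hstep : Tendsto (fun n : ℕ => (v (n + 1) - v n) / n) atTop (𝓝 0) :=
    h.div_atTop tendsto_natCast_atTop_atTop
  simpa [sub_div] using (tendsto_div_natCast_of_tendsto_sub h).add hstep

section NatLog

variable {b : ℕ}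

lemma tendsto_logb_natCast_atTop (hb : 1 < b) :
    Tendsto (fun k : ℕ => logb b k) atTop atTop :=
  (tendsto_logb_atTop (by exact_mod_cast hb)).comp tendsto_natCast_atTop_atTop

lemma tendsto_natLog_atTop (hb : 1 < b) : Tendsto (Nat.log b) atTop atTop := by
  simpa only [Function.comp_def, Real.natFloor_logb_natCast] using
    tendsto_nat_floor_atTop.comp (tendsto_logb_natCast_atTop hb)

lemma tendsto_natLog_div_logb (hb : 1 < b) :
    Tendsto (fun k : ℕ => (Nat.log b k : ℝ) / logb b k) atTop (𝓝 1) := by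
  simpa only [Function.comp_def, Real.natFloor_logb_natCast] using
    tendsto_nat_floor_div_atTop.comp (tendsto_logb_natCast_atTop hb)

lemma eventually_le_pow_natLog (hb : 1 < b) (n : ℕ) :
    ∀ᶠ k in atTop, n ≤ b ^ Nat.log b k ∧ 0 < Nat.log b k := by
  filter_upwards [(tendsto_natLog_atTop hb).eventually_ge_atTop (n + 1)] with k hk
  exact ⟨(Nat.lt_pow_self hb).le.trans' (by omega), by omega⟩

end NatLog

section EventuallyAntitone

variable {u : ℕ → ℝ} {b n₀ : ℕ} {L : ℝ}

lemma tendsto_log_div_natLog_of_antitoneOn (hb : 1 < b) (hpos : ∀ k, n₀ ≤ k → 0 < u k)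
    (hanti : AntitoneOn u (Set.Ici n₀))
    (hdiff : Tendsto (fun n => log (u (b ^ (n + 1))) - log (u (b ^ n))) atTop (𝓝 L)) :
    Tendsto (fun k : ℕ => log (u k) / Nat.log b k) atTop (𝓝 L) := by
  have hlow := (tendsto_succ_div_natCast_of_tendsto_sub (v := fun n => log (u (b ^ n))) hdiff).comp
    (tendsto_natLog_atTop hb)
  have hup := (tendsto_div_natCast_of_tendsto_sub (v := fun n => log (u (b ^ n))) hdiff).comp
    (tendsto_natLog_atTop hb)
  have hbracket : ∀ᶠ k in atTop, n₀ ≤ b ^ Nat.log b k ∧ b ^ Nat.log b k ≤ k ∧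
      k ≤ b ^ (Nat.log b k + 1) ∧ (0 : ℝ) < Nat.log b k := by
    filter_upwards [eventually_le_pow_natLog hb n₀] with k ⟨hn₀, hm⟩
    have hk : k ≠ 0 := by rintro rfl; simp at hm
    exact ⟨hn₀, Nat.pow_log_le_self b hk, (Nat.lt_pow_succ_log_self hb k).le,
      by exact_mod_cast hm⟩
  refine tendsto_of_tendsto_of_tendsto_of_le_of_le' hlow hup ?_ ?_
  · filter_upwards [hbracket] with k ⟨hn₀, hlo, hhi, hm⟩
    have hnext : n₀ ≤ b ^ (Nat.log b k + 1) := hn₀.trans (hlo.trans hhi)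
    have := log_le_log (hpos _ hnext) (hanti (hn₀.trans hlo) hnext hhi)
    dsimp only [Function.comp_apply]
    gcongr
  · filter_upwards [hbracket] with k ⟨hn₀, hlo, _, hm⟩
    have := log_le_log (hpos _ (hn₀.trans hlo)) (hanti hn₀ (hn₀.trans hlo) hlo)
    dsimp only [Function.comp_apply]
    gcongr

lemma tendsto_log_div_log_of_tendsto_div_natLog (hb : 1 < b)
    (h : Tendsto (fun k : ℕ => log (u k) / Nat.log b k) atTop (𝓝 L)) :
    Tendsto (fun k : ℕ => log (u k) / log k) atTop (𝓝 (L / log b)) := by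
  have hlogb : log b ≠ 0 := (log_pos (by exact_mod_cast hb)).ne'
  have hprod := (h.mul (tendsto_natLog_div_logb hb)).div_const (log b)
  rw [mul_one] at hprod
  refine hprod.congr' ?_
  filter_upwards [eventually_le_pow_natLog hb 0] with k ⟨_, hm⟩
  have hm' : (Nat.log b k : ℝ) ≠ 0 := by exact_mod_cast hm.ne'
  rw [logb]
  field_simp

lemma tendsto_log_div_log_of_tendsto_ratio_pow (hb : 1 < b) (hpos : ∀ k, n₀ ≤ k → 0 < u k)
    (hanti : AntitoneOn u (Set.Ici n₀)) {c : ℝ} (hc : 0 < c)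
    (hratio : Tendsto (fun n => u (b ^ (n + 1)) / u (b ^ n)) atTop (𝓝 c)) :
    Tendsto (fun k : ℕ => log (u k) / log k) atTop (𝓝 (log c / log b)) := by
  have hdiff : Tendsto (fun n => log (u (b ^ (n + 1))) - log (u (b ^ n))) atTop (𝓝 (log c)) := by
    refine ((continuousAt_log hc.ne').tendsto.comp hratio).congr' ?_
    filter_upwards [eventually_ge_atTop n₀] with n hn
    have hpow : n₀ ≤ b ^ n := hn.trans (Nat.lt_pow_self hb).le
    have hpow' : n₀ ≤ b ^ (n + 1) := hpow.trans (Nat.pow_le_pow_right (by omega) n.le_succ)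
    exact log_div (hpos _ hpow').ne' (hpos _ hpow).ne'
  exact tendsto_log_div_log_of_tendsto_div_natLog hb
    (tendsto_log_div_natLog_of_antitoneOn hb hpos hanti hdiff)

end EventuallyAntitone

lemma tendsto_ratio_pow_of_eq_comp_ceil {p : ℕ → ℝ} {f : ℝ → ℝ} {b : ℕ} {c : ℝ}
    (hb : 1 < b) (hf : ∀ t : ℝ, 0 < t → f t = p ⌈t⌉₊)
    (h : Tendsto (fun t : ℝ => f (b * t) / f t) atTop (𝓝 c)) :
    Tendsto (fun n => p (b ^ (n + 1)) / p (b ^ n)) atTop (𝓝 c) := by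
  have hpow : Tendsto (fun n : ℕ => ((b ^ n : ℕ) : ℝ)) atTop atTop := by
    simpa only [Nat.cast_pow] using
      tendsto_pow_atTop_atTop_of_one_lt (by exact_mod_cast hb : (1 : ℝ) < b)
  refine (h.comp hpow).congr fun n => ?_
  have hbn : (0 : ℝ) < (b ^ n : ℕ) := by positivity
  rw [Function.comp_apply, hf _ (mul_pos (by positivity) hbn), hf _ hbn, ← Nat.cast_mul,
    ← pow_succ', Nat.ceil_natCast, Nat.ceil_natCast]

theorem entropy_summable_iff_of_regularly_varying_index_one_general
    (p : ℕ → ℝ) (hp : ∀ k : ℕ, 1 ≤ k → 0 < p k)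
    (hmono : ∃ n0 : ℕ, ∀ n : ℕ, n0 ≤ n → p (n + 1) ≤ p n)
    (f : ℝ → ℝ) (hf : ∀ t : ℝ, 0 < t → f t = p ⌈t⌉₊)
    (hrv : ∀ l : ℝ, 0 < l →
      Tendsto (fun t : ℝ => f (l * t) / f t) atTop (nhds (l ^ (-(1 : ℝ))))) :
    Summable (fun k : ℕ => p (k + 1) * Real.log (p (k + 1))) ↔
      Summable (fun k : ℕ => p (k + 1) * Real.log ((k : ℝ) + 1)) := by
  obtain ⟨n0, hn0⟩ := hmono
  have hanti : AntitoneOn p (Set.Ici (max n0 1)) :=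
    (antitoneOn_nat_Ici_of_succ_le hn0).mono (Set.Ici_subset_Ici.2 (le_max_left _ _))
  have hratio : Tendsto (fun n => p (2 ^ (n + 1)) / p (2 ^ n)) atTop (𝓝 2⁻¹) := by
    simpa [rpow_neg_one] using tendsto_ratio_pow_of_eq_comp_ceil one_lt_two hf (hrv 2 two_pos)
  have hlog : Tendsto (fun k : ℕ => log (p k) / log k) atTop (𝓝 (-1)) := by
    have := tendsto_log_div_log_of_tendsto_ratio_pow one_lt_two
      (fun k hk => hp k (le_of_max_le_right hk)) hanti (by norm_num) hratio
    simpa [log_inv, neg_div, div_self (log_pos one_lt_two).ne'] using this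
  have hquot : Tendsto (fun k : ℕ => p (k + 1) * log (p (k + 1)) / (p (k + 1) * log (k + 1)))
      atTop (𝓝 (-1)) :=
    (hlog.comp (tendsto_add_atTop_nat 1)).congr fun k => by
      rw [mul_div_mul_left _ _ (hp _ k.succ_pos).ne', Function.comp_apply, Nat.cast_succ]
  exact (isTheta_of_div_tendsto_nhds_ne_zero hquot (by norm_num)).summable_iff_nat.symm

/-- For an eventually monotone probability mass function whose step function is
regularly varying with index `-1`, the entropy series `∑ p_k log p_k` is
summable iff `∑ p_k log k` is summable. -/
theorem entropy_summable_iff_of_regularly_varying_index_one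
    (p : ℕ → ℝ) (hp : ∀ k : ℕ, 1 ≤ k → 0 < p k)
    (hsum : HasSum (fun k : ℕ => p (k + 1)) 1)
    (hmono : ∃ n0 : ℕ, ∀ n : ℕ, n0 ≤ n → p (n + 1) ≤ p n)
    (f : ℝ → ℝ) (hf : ∀ t : ℝ, 0 < t → f t = p ⌈t⌉₊)
    (hrv : ∀ l : ℝ, 0 < l →
      Tendsto (fun t : ℝ => f (l * t) / f t) atTop (nhds (l ^ (-(1 : ℝ))))) :
    Summable (fun k : ℕ => p (k + 1) * Real.log (p (k + 1))) ↔
      Summable (fun k : ℕ => p (k + 1) * Real.log ((k : ℝ) + 1)) :=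
  entropy_summable_iff_of_regularly_varying_index_one_general p hp hmono f hf hrv
end

section
/- Let d ∈ (0,1) and α > 0, and define f(t) = ((1−d)/α)·(Γ(α/d + ⌈t⌉)/Γ(α/d))·(Γ((α+1)/d)/Γ((α+1)/d + ⌈t⌉)) for t > 0, where Γ is the real Gamma function. Then for every λ > 0, f(λt)/f(t) → λ^{−1/d} as t → ∞; that is, f is regularly varying with index −1/d. -/
/-!
By Euler's limit formula, `Γ(s + n + 1) ∼ n ^ s * n!`, so `Γ(a + n) / Γ(b + n) ∼ n ^ (a - b)`.
With `a = α / d` and `b = (α + 1) / d` the step function is a constant multiple of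
`n ↦ Γ(a + n) / Γ(b + n)` evaluated at `n = ⌈t⌉`, hence behaves like `⌈t⌉ ^ (-1 / d)`, and
`⌈λ t⌉ / ⌈t⌉ → λ`.
-/

open Filter Finset Topology

namespace Real

lemma Gamma_add_natCast_eq_mul_prod {s : ℝ} (hs : 0 < s) (n : ℕ) :
    Gamma (s + n) = Gamma s * ∏ j ∈ range n, (s + j) := by
  induction n with
  | zero => simp
  | succ n ih =>
    rw [Nat.cast_succ, ← add_assoc, Gamma_add_one (by positivity), ih, prod_range_succ]
    ring

lemma tendsto_Gamma_add_natCast_add_one_div {s : ℝ} (hs : 0 < s) :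
    Tendsto (fun n : ℕ => Gamma (s + (n + 1)) / ((n : ℝ) ^ s * n.factorial)) atTop (𝓝 1) := by
  have hΓ : Gamma s ≠ 0 := (Gamma_pos_of_pos hs).ne'
  have hlim := (tendsto_const_nhds (x := Gamma s)).div (GammaSeq_tendsto_Gamma s) hΓ
  rw [div_self hΓ] at hlim
  refine hlim.congr' ?_
  filter_upwards [eventually_ge_atTop 1] with n hn
  have hn : (0 : ℝ) < n := by exact_mod_cast hn
  have hprod : (0 : ℝ) < ∏ j ∈ range (n + 1), (s + j) := prod_pos fun j _ => by positivity
  rw [Pi.div_apply, GammaSeq, ← Nat.cast_add_one, Gamma_add_natCast_eq_mul_prod hs]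
  field_simp [(rpow_pos_of_pos hn s).ne', hprod.ne', n.factorial_pos.ne']

lemma tendsto_rpow_mul_Gamma_add_div_Gamma_add {a b : ℝ} (ha : 0 < a) (hb : 0 < b) :
    Tendsto (fun n : ℕ => (n : ℝ) ^ (b - a) * (Gamma (a + n) / Gamma (b + n))) atTop (𝓝 1) := by
  have hlim := ((tendsto_Gamma_add_natCast_add_one_div ha).div
    (tendsto_Gamma_add_natCast_add_one_div hb) one_ne_zero).mul
    ((tendsto_natCast_div_add_atTop a).div (tendsto_natCast_div_add_atTop b) one_ne_zero)
  rw [div_one, one_mul] at hlim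
  refine hlim.congr' ?_
  filter_upwards [eventually_ge_atTop 1] with n hn
  have hn : (0 : ℝ) < n := by exact_mod_cast hn
  simp only [Pi.div_apply]
  rw [← add_assoc, ← add_assoc, Gamma_add_one (by positivity), Gamma_add_one (by positivity),
    rpow_sub hn]
  field_simp [(Gamma_pos_of_pos (by positivity : 0 < a + n)).ne',
    (Gamma_pos_of_pos (by positivity : 0 < b + n)).ne', (rpow_pos_of_pos hn a).ne',
    (rpow_pos_of_pos hn b).ne', n.factorial_pos.ne']
  ring

end Real

lemma tendsto_natCeil_mul_div_natCeil {l : ℝ} (hl : 0 ≤ l) :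
    Tendsto (fun t : ℝ => (⌈l * t⌉₊ : ℝ) / ⌈t⌉₊) atTop (𝓝 l) := by
  have hlim := (tendsto_nat_ceil_mul_div_atTop hl).div tendsto_nat_ceil_div_atTop one_ne_zero
  rw [div_one] at hlim
  refine hlim.congr' ?_
  filter_upwards [eventually_gt_atTop 0] with t ht
  exact div_div_div_cancel_right₀ ht.ne' _ _

lemma tendsto_comp_natCeil_mul_div_comp_natCeil {u : ℕ → ℝ} {c L l : ℝ}
    (hu : Tendsto (fun n : ℕ => (n : ℝ) ^ c * u n) atTop (𝓝 L)) (hL : L ≠ 0) (hl : 0 < l) :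
    Tendsto (fun t : ℝ => u ⌈l * t⌉₊ / u ⌈t⌉₊) atTop (𝓝 (l ^ (-c))) := by
  have hceil : Tendsto (fun t : ℝ => ⌈t⌉₊) atTop atTop := tendsto_nat_ceil_atTop
  have hceil_mul : Tendsto (fun t : ℝ => ⌈l * t⌉₊) atTop atTop :=
    tendsto_nat_ceil_atTop.comp (tendsto_id.const_mul_atTop hl)
  have hpow := (tendsto_natCeil_mul_div_natCeil hl.le).rpow_const (p := -c) (Or.inl hl.ne')
  have hlim := ((hu.comp hceil_mul).div (hu.comp hceil) hL).mul hpow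
  rw [div_self hL, one_mul] at hlim
  refine hlim.congr' ?_
  filter_upwards [eventually_gt_atTop 0] with t ht
  have hn : (0 : ℝ) < ⌈t⌉₊ := by simpa using ht
  have hm : (0 : ℝ) < ⌈l * t⌉₊ := by simpa using mul_pos hl ht
  simp only [Pi.div_apply, Function.comp_apply]
  rw [Real.rpow_neg (by positivity), Real.div_rpow hm.le hn.le]
  field_simp [(Real.rpow_pos_of_pos hn c).ne', (Real.rpow_pos_of_pos hm c).ne']

/-- The step function of the marginal Pitman–Yor probability mass function with
discount parameter `d ∈ (0,1)` is regularly varying with index `-1/d`. -/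
theorem mpy_step_function_regularly_varying
    (d α : ℝ) (hd0 : 0 < d) (hd1 : d < 1) (hα : 0 < α)
    (f : ℝ → ℝ)
    (hf : ∀ t : ℝ, 0 < t →
      f t = ((1 - d) / α) * (Real.Gamma (α / d + ⌈t⌉₊) / Real.Gamma (α / d)) *
        (Real.Gamma ((α + 1) / d) / Real.Gamma ((α + 1) / d + ⌈t⌉₊))) :
    ∀ l : ℝ, 0 < l →
      Tendsto (fun t : ℝ => f (l * t) / f t) atTop (nhds (l ^ (-1 / d))) := by
  intro l hl
  set a := α / d
  set b := (α + 1) / d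
  have ha : 0 < a := div_pos hα hd0
  have hb : 0 < b := div_pos (by linarith) hd0
  set K := (1 - d) / α * Real.Gamma b / Real.Gamma a
  have hK : K ≠ 0 := (div_pos (mul_pos (div_pos (by linarith) hα) (Real.Gamma_pos_of_pos hb))
    (Real.Gamma_pos_of_pos ha)).ne'
  have hfK : ∀ t : ℝ, 0 < t →
      f t = K * (Real.Gamma (a + ⌈t⌉₊) / Real.Gamma (b + ⌈t⌉₊)) := fun t ht => by
    rw [hf t ht]; ring
  have hlim := tendsto_comp_natCeil_mul_div_comp_natCeil
    (Real.tendsto_rpow_mul_Gamma_add_div_Gamma_add ha hb) one_ne_zero hl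
  rw [show -(b - a) = -1 / d by simp only [a, b]; field_simp; ring] at hlim
  refine hlim.congr' ?_
  filter_upwards [eventually_gt_atTop 0] with t ht
  rw [hfK t ht, hfK (l * t) (mul_pos hl ht), mul_div_mul_left _ _ hK]
end

section
/- Let d ∈ [0,1) and α > 0, and define p_k = ((1−d)/α)·∏_{j=1}^{k} (α+(j−1)d)/(α+(j−1)d+1) for k = 1,2,…. Then the sequence k ↦ p_k·log p_k is summable; that is, the Shannon entropy −∑_{k=1}^{∞} p_k log p_k of the marginal Pitman–Yor process is finite. -/
/-!
Each factor is `1 - 1/z` with `z = α + 1 + j d ≤ α + 1 + j e` for any `e ≥ d`, and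
`1 - 1/z ≤ exp (-1/z) ≤ (z / (z + e)) ^ (1/e)`; at `z = α + 1 + j e` the right-hand sides
telescope. Taking `e ∈ (d, 1)` gives `p_k = O(k ^ (-1/e))` with `1/e > 1`. Since
`-x log x ≤ x ^ r / (1 - r)` on `[0, 1]`, any `r < 1` with `r / e > 1` makes `p_k log p_k`
summable by comparison with `∑ k ^ (-r/e)`.
-/

open Real Finset

theorem Real.neg_mul_log_le_rpow_div {x r : ℝ} (hx : 0 ≤ x) (hr : r < 1) :
    -(x * log x) ≤ x ^ r / (1 - r) := by
  rcases hx.eq_or_lt with rfl | hx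
  · simp only [zero_mul, neg_zero]
    exact div_nonneg (rpow_nonneg le_rfl r) (by linarith)
  have hlog : log x⁻¹ ≤ x⁻¹ ^ (1 - r) / (1 - r) := log_le_rpow_div (by positivity) (by linarith)
  have hpow : x * x⁻¹ ^ (1 - r) = x ^ r := by
    rw [inv_rpow hx.le, ← rpow_neg hx.le]
    nth_rewrite 1 [← rpow_one x]
    rw [← rpow_add hx]
    ring_nf
  calc -(x * log x) = x * log x⁻¹ := by rw [log_inv]; ring
    _ ≤ x * (x⁻¹ ^ (1 - r) / (1 - r)) := mul_le_mul_of_nonneg_left hlog hx.le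
    _ = x ^ r / (1 - r) := by rw [← mul_div_assoc, hpow]

theorem summable_mul_log_of_summable_rpow {ι : Type*} {f : ι → ℝ} {r : ℝ} (hr0 : 0 < r)
    (hr1 : r < 1) (hf0 : ∀ i, 0 ≤ f i) (hf : Summable fun i => f i ^ r) :
    Summable fun i => f i * log (f i) := by
  refine Summable.of_norm_bounded_eventually (hf.div_const (1 - r)) ?_
  filter_upwards [hf.tendsto_cofinite_zero.eventually (gt_mem_nhds one_pos)] with i hi
  have hfi : f i ≤ 1 := by
    by_contra! h
    exact (one_le_rpow h.le hr0.le).not_gt hi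
  rw [norm_eq_abs, abs_of_nonpos (mul_nonpos_of_nonneg_of_nonpos (hf0 i) (log_nonpos (hf0 i) hfi))]
  exact neg_mul_log_le_rpow_div (hf0 i) hr1

theorem summable_rpow_of_le_mul_rpow {f : ℕ → ℝ} {C c r : ℝ} (hr : 0 < r) (hcr : 1 < c * r)
    (hf0 : ∀ k, 0 ≤ f k) (hf : ∀ k, f k ≤ C * ((k : ℝ) + 1) ^ (-c)) :
    Summable fun k => f k ^ r := by
  have hC : 0 ≤ C := by simpa using (hf0 0).trans (hf 0)
  have hmajorant : Summable fun k : ℕ => C ^ r * ((k : ℝ) + 1) ^ (-(c * r)) := by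
    refine Summable.mul_left _ ?_
    have := (summable_nat_add_iff 1).mpr (Real.summable_nat_rpow.mpr (by linarith : -(c * r) < -1))
    simpa only [Nat.cast_add, Nat.cast_one] using this
  refine hmajorant.of_nonneg_of_le (fun k => rpow_nonneg (hf0 k) r) fun k => ?_
  calc f k ^ r ≤ (C * ((k : ℝ) + 1) ^ (-c)) ^ r := rpow_le_rpow (hf0 k) (hf k) hr.le
    _ = C ^ r * ((k : ℝ) + 1) ^ (-(c * r)) := by
      rw [mul_rpow hC (by positivity), ← rpow_mul (by positivity), neg_mul]

theorem Real.one_sub_inv_le_rpow_div_add {z e : ℝ} (hz : 0 < z) (he : 0 < e) :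
    1 - z⁻¹ ≤ (z / (z + e)) ^ e⁻¹ := by
  have hlog : -(e / z) ≤ log (z / (z + e)) := by
    have := one_sub_inv_le_log_of_pos (show 0 < z / (z + e) by positivity)
    rw [inv_div, add_div, div_self hz.ne'] at this
    linarith
  calc 1 - z⁻¹ ≤ exp (-z⁻¹) := by linarith [add_one_le_exp (-z⁻¹)]
    _ ≤ exp (log (z / (z + e)) * e⁻¹) := by
      rw [exp_le_exp, ← div_eq_mul_inv, le_div_iff₀ he]
      calc -z⁻¹ * e = -(e / z) := by ring
        _ ≤ _ := hlog
    _ = (z / (z + e)) ^ e⁻¹ := (rpow_def_of_pos (by positivity) _).symm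

theorem prod_range_one_sub_inv_le {β e : ℝ} (hβ : 1 ≤ β) (he : 0 < e) (k : ℕ) :
    ∏ j ∈ range k, (1 - (β + j * e)⁻¹) ≤ (β / (β + k * e)) ^ e⁻¹ := by
  induction k with
  | zero => simp [div_self (by positivity : β ≠ 0)]
  | succ k ih =>
    have hz : 1 ≤ β + k * e := le_add_of_le_of_nonneg hβ (by positivity)
    have hz0 : 0 < β + k * e := by linarith
    rw [prod_range_succ]
    calc (∏ j ∈ range k, (1 - (β + j * e)⁻¹)) * (1 - (β + k * e)⁻¹)
        ≤ (β / (β + k * e)) ^ e⁻¹ * ((β + k * e) / (β + k * e + e)) ^ e⁻¹ :=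
          mul_le_mul ih (one_sub_inv_le_rpow_div_add hz0 he)
            (sub_nonneg.mpr (inv_le_one_of_one_le₀ hz)) (by positivity)
      _ = (β / (β + ↑(k + 1) * e)) ^ e⁻¹ := by
        rw [← mul_rpow (by positivity) (by positivity)]
        congr 1
        push_cast
        field_simp
        ring

theorem prod_range_div_add_one_le {α d e : ℝ} (hα : 0 < α) (hd : 0 ≤ d) (hde : d ≤ e)
    (he : 0 < e) (k : ℕ) :
    ∏ j ∈ range k, (α + j * d) / (α + j * d + 1) ≤ ((α + 1) / (α + 1 + k * e)) ^ e⁻¹ := by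
  refine le_trans (prod_le_prod (fun j _ => by positivity) fun j _ => ?_)
    (prod_range_one_sub_inv_le (by linarith) he k)
  have hfactor : (α + j * d) / (α + j * d + 1) = 1 - (α + j * d + 1)⁻¹ := by
    field_simp
    ring
  rw [hfactor, sub_le_sub_iff_left]
  exact inv_anti₀ (by positivity) (by nlinarith [(Nat.cast_nonneg j : (0 : ℝ) ≤ j)])

theorem prod_range_succ_div_add_one_le_mul_rpow {α d e : ℝ} (hα : 0 < α) (hd : 0 ≤ d)
    (hde : d ≤ e) (he : 0 < e) (k : ℕ) :
    ∏ j ∈ range (k + 1), (α + j * d) / (α + j * d + 1) ≤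
      ((α + 1) / e) ^ e⁻¹ * ((k : ℝ) + 1) ^ (-e⁻¹) := by
  refine (prod_range_div_add_one_le hα hd hde he (k + 1)).trans ?_
  have hk : (0 : ℝ) < k + 1 := by positivity
  calc ((α + 1) / (α + 1 + ↑(k + 1) * e)) ^ e⁻¹ ≤ ((α + 1) / e / ((k : ℝ) + 1)) ^ e⁻¹ := by
        rw [div_div, mul_comm e]
        gcongr
        push_cast
        linarith
    _ = ((α + 1) / e) ^ e⁻¹ * ((k : ℝ) + 1) ^ (-e⁻¹) := by
      rw [div_rpow (by positivity) hk.le, rpow_neg hk.le, div_eq_mul_inv]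

/-- The Shannon entropy of the marginal Pitman–Yor process is finite: the
sequence `k ↦ p_k log p_k` is summable. -/
theorem mpy_entropy_finite (d α : ℝ) (hd0 : 0 ≤ d) (hd1 : d < 1) (hα : 0 < α)
    (p : ℕ → ℝ)
    (hp : ∀ k : ℕ, 1 ≤ k →
      p k = ((1 - d) / α) *
        ∏ j ∈ Finset.range k, (α + (j : ℝ) * d) / (α + (j : ℝ) * d + 1)) :
    Summable (fun k : ℕ => p (k + 1) * Real.log (p (k + 1))) := by
  obtain ⟨e, hde, he1⟩ := exists_between hd1
  have he : 0 < e := by linarith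
  have hcoef : 0 ≤ (1 - d) / α := div_nonneg (by linarith) hα.le
  have hp0 : ∀ k, 0 ≤ p (k + 1) := fun k => by
    rw [hp _ k.succ_pos]
    exact mul_nonneg hcoef (prod_nonneg fun j _ => by positivity)
  have hpC : ∀ k, p (k + 1) ≤ ((1 - d) / α * ((α + 1) / e) ^ e⁻¹) * ((k : ℝ) + 1) ^ (-e⁻¹) :=
    fun k => by
      rw [hp _ k.succ_pos, mul_assoc]
      exact mul_le_mul_of_nonneg_left (prod_range_succ_div_add_one_le_mul_rpow hα hd0 hde.le he k)
        hcoef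
  have hexp : 1 < e⁻¹ * ((1 + e) / 2) := by
    rw [← div_eq_inv_mul, lt_div_iff₀ he]
    linarith
  exact summable_mul_log_of_summable_rpow (by positivity) (by linarith) hp0
    (summable_rpow_of_le_mul_rpow (by positivity) hexp hp0 hpC)
end
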